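/- arXiv:2411.04621 — 6 statements merged into one kernel-verified Lean document; each statement's English description precedes it below -/
import Mathlib

section
/- Let V be a finite-dimensional complex inner product space of dimension k ≥ 1 and let R be a Kähler curvature-type tensor on V. Let (E_1,…,E_k) be an orthonormal basis of V and let σ denote the rotation-invariant probability measure on the unit sphere of V. Then ∫ R(Z,Z̄,Z,Z̄) dσ(Z) = (2/(k(k+1))) · Σ_{i,j=1}^k R(E_i,Ē_i,E_j,Ē_j). (Both sides are real.) -/
open MeasureTheory

/-- A Kähler curvature-type tensor on a complex vector space `V`: a map
`R : V × V × V × V → ℂ` that is `ℂ`-linear in the first and third arguments,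
conjugate-linear in the second and fourth arguments, and satisfies the Kähler
symmetries `R(X,Y,Z,W) = R(Z,Y,X,W)`, `R(X,Y,Z,W) = R(X,W,Z,Y)` and
`conj (R(X,Y,Z,W)) = R(Y,X,W,Z)`. -/
structure IsKahlerCurvatureTensor {V : Type*} [AddCommGroup V] [Module ℂ V]
    (R : V → V → V → V → ℂ) : Prop where
  map_add₁ : ∀ x x' y z w, R (x + x') y z w = R x y z w + R x' y z w
  map_smul₁ : ∀ (a : ℂ) (x y z w : V), R (a • x) y z w = a * R x y z w
  map_add₂ : ∀ x y y' z w, R x (y + y') z w = R x y z w + R x y' z w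
  map_smul₂ : ∀ (a : ℂ) (x y z w : V), R x (a • y) z w = starRingEnd ℂ a * R x y z w
  map_add₃ : ∀ x y z z' w, R x y (z + z') w = R x y z w + R x y z' w
  map_smul₃ : ∀ (a : ℂ) (x y z w : V), R x y (a • z) w = a * R x y z w
  map_add₄ : ∀ x y z w w', R x y z (w + w') = R x y z w + R x y z w'
  map_smul₄ : ∀ (a : ℂ) (x y z w : V), R x y z (a • w) = starRingEnd ℂ a * R x y z w
  symm₁₃ : ∀ x y z w, R x y z w = R z y x w
  symm₂₄ : ∀ x y z w, R x y z w = R x w z y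
  conj_symm : ∀ x y z w, starRingEnd ℂ (R x y z w) = R y x w z

/-!
Expanding `R(Z,Z̄,Z,Z̄)` in the coordinates `z = E.repr Z` reduces the claim to the fourth
moments `∫ z_a z̄_b z_c z̄_d` of the image of `σ` in `ℂ^k`, a probability measure on the unit
sphere invariant under the whole unitary group. Diagonal phase rotations kill every moment
unless `{a, c} = {b, d}` as multisets; coordinate permutations make `∫ |z_a|⁴` independent
of `a`; the unitary `(z_a, z_c) ↦ ((z_a + z_c)/√2, (z_a - z_c)/√2)` gives
`∫ |z_a|² |z_c|² = ½ ∫ |z_a|⁴` for `a ≠ c`; and `∑_{a,c} ∫ |z_a|² |z_c|² = ∫ ‖z‖⁴ = 1`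
fixes the constant. Hence `∫ z_a z̄_b z_c z̄_d = (δ_ab δ_cd + δ_cb δ_ad) / (k (k + 1))`, and
the Kähler symmetry `R(X,Ȳ,Z,W̄) = R(X,W̄,Z,Ȳ)` merges the two resulting sums.
-/

open ComplexConjugate Finset

theorem Multiset.pair_eq_pair_iff {α : Type*} {a b c d : α} :
    ({a, c} : Multiset α) = {b, d} ↔ b = a ∧ d = c ∨ b = c ∧ d = a := by
  classical
  simp only [insert_eq_cons, cons_eq_cons, singleton_inj, ne_eq, singleton_eq_cons_iff,
    exists_eq_right_right, and_true]
  grind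

theorem Complex.inv_sqrt_two_sq : ((√2 : ℂ)⁻¹) ^ 2 = 2⁻¹ := by
  rw [inv_pow, ← ofReal_pow, Real.sq_sqrt zero_le_two]
  norm_num

theorem Complex.I_pow_mul_conj_I_pow_ne_one {m n : ℕ} (hm : m ≤ 2) (hn : n ≤ 2) (hmn : m ≠ n) :
    I ^ m * conj I ^ n ≠ 1 := by
  rw [conj_I]
  revert hmn
  interval_cases m <;> interval_cases n <;> norm_num [Complex.ext_iff]

theorem ContinuousOn.integrable_of_ae_mem {X F : Type*} [TopologicalSpace X] [T2Space X]
    [MeasurableSpace X] [OpensMeasurableSpace X] [NormedAddCommGroup F] {μ : Measure X}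
    [IsFiniteMeasureOnCompacts μ] {K : Set X} {f : X → F} (hf : ContinuousOn f K)
    (hK : IsCompact K) (hμ : ∀ᵐ x ∂μ, x ∈ K) : Integrable f μ := by
  rw [← Measure.restrict_eq_self_of_ae_mem hμ]
  exact hf.integrableOn_compact hK

namespace EuclideanSpace

variable {ι : Type*} [Fintype ι]

noncomputable def phaseRotation (θ : ι → ℂ) (hθ : ∀ i, ‖θ i‖ = 1) :
    EuclideanSpace ℂ ι ≃ₗᵢ[ℂ] EuclideanSpace ℂ ι :=
  LinearIsometryEquiv.piLpCongrRight 2 fun i =>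
    (LinearEquiv.smulOfNeZero ℂ ℂ (θ i) (norm_ne_zero_iff.mp (by simp [hθ i]))).isometryOfInner
      fun x y => by
        rw [LinearEquiv.smulOfNeZero_apply, LinearEquiv.smulOfNeZero_apply, inner_smul_left,
          inner_smul_right, ← mul_assoc, Complex.conj_mul', hθ i]
        simp

@[simp]
theorem phaseRotation_apply (θ : ι → ℂ) (hθ : ∀ i, ‖θ i‖ = 1) (x : EuclideanSpace ℂ ι) (i : ι) :
    phaseRotation θ hθ x i = θ i * x i := rfl

section Hadamard

variable [DecidableEq ι]

noncomputable def hadamardRotation (a c : ι) (hac : a ≠ c) :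
    EuclideanSpace ℂ ι ≃ₗᵢ[ℂ] EuclideanSpace ℂ ι :=
  let H : EuclideanSpace ℂ ι →ₗ[ℂ] EuclideanSpace ℂ ι :=
    { toFun x := WithLp.toLp 2 fun i =>
        if i = a then (x a + x c) / √2 else if i = c then (x a - x c) / √2 else x i
      map_add' x y := by
        ext i
        simp only [PiLp.add_apply]
        split_ifs <;> ring
      map_smul' t x := by
        ext i
        simp only [PiLp.smul_apply, smul_eq_mul, RingHom.id_apply]
        split_ifs <;> ring }
  have hH (x : EuclideanSpace ℂ ι) (i : ι) : H x i =
      if i = a then (x a + x c) / √2 else if i = c then (x a - x c) / √2 else x i := rfl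
  (LinearEquiv.ofInvolutive H fun x => by
    ext i
    simp only [hH, if_neg hac.symm]
    split_ifs with h1 h2
    · subst h1
      linear_combination x i * Complex.inv_sqrt_two_sq * 2
    · subst h2
      linear_combination x i * Complex.inv_sqrt_two_sq * 2
    · rfl).isometryOfInner fun x y => by
    change ∑ i, inner ℂ (H x i) (H y i) = ∑ i, inner ℂ (x i) (y i)
    rw [← sub_eq_zero, ← Finset.sum_sub_distrib,
      Fintype.sum_eq_add a c hac fun i hi => by simp [hH, hi.1, hi.2]]
    simp only [hH, if_neg hac.symm, RCLike.inner_apply, map_div₀, map_add, map_sub,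
      Complex.conj_ofReal, if_true]
    linear_combination (y a * conj (x a) + y c * conj (x c)) * Complex.inv_sqrt_two_sq * 2

@[simp]
theorem hadamardRotation_apply_left (a c : ι) (hac : a ≠ c) (x : EuclideanSpace ℂ ι) :
    hadamardRotation a c hac x a = (x a + x c) / √2 := by
  simp [hadamardRotation]

@[simp]
theorem hadamardRotation_apply_right (a c : ι) (hac : a ≠ c) (x : EuclideanSpace ℂ ι) :
    hadamardRotation a c hac x c = (x a - x c) / √2 := by
  simp [hadamardRotation, hac.symm]

end Hadamard

noncomputable def quarticMoment (μ : Measure (EuclideanSpace ℂ ι)) (a b c d : ι) : ℂ :=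
  ∫ x, x a * conj (x b) * x c * conj (x d) ∂μ

variable {μ : Measure (EuclideanSpace ℂ ι)}

theorem integrable_of_ae_mem_sphere [IsFiniteMeasure μ]
    (hsphere : ∀ᵐ x ∂μ, x ∈ Metric.sphere (0 : EuclideanSpace ℂ ι) 1)
    {f : EuclideanSpace ℂ ι → ℂ} (hf : Continuous f) : Integrable f μ :=
  hf.continuousOn.integrable_of_ae_mem (isCompact_sphere 0 1) hsphere

theorem integral_comp_linearIsometryEquiv
    (hinv : ∀ U : EuclideanSpace ℂ ι ≃ₗᵢ[ℂ] EuclideanSpace ℂ ι, μ.map U = μ)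
    (U : EuclideanSpace ℂ ι ≃ₗᵢ[ℂ] EuclideanSpace ℂ ι)
    (f : EuclideanSpace ℂ ι → ℂ) : ∫ x, f (U x) ∂μ = ∫ x, f x ∂μ :=
  MeasurePreserving.integral_comp ⟨U.continuous.measurable, hinv U⟩
    U.toHomeomorph.measurableEmbedding f

theorem quarticMoment_eq_zero [DecidableEq ι]
    (hinv : ∀ U : EuclideanSpace ℂ ι ≃ₗᵢ[ℂ] EuclideanSpace ℂ ι, μ.map U = μ) (a b c d : ι)
    (h : ({a, c} : Multiset ι) ≠ {b, d}) : quarticMoment μ a b c d = 0 := by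
  obtain ⟨j, hj⟩ := not_forall.mp (mt Multiset.ext.mpr h)
  -- rotating coordinate `j` by `I` multiplies the moment by `I ^ m * conj I ^ n`, where `m` and
  -- `n` are the multiplicities of `j` in `{a, c}` and `{b, d}`
  set θ : ι → ℂ := fun i => Complex.I ^ ({i} : Multiset ι).count j
  have hθ (i : ι) : ‖θ i‖ = 1 := by simp [θ]
  have hpair (p q : ι) : θ p * θ q = Complex.I ^ ({p, q} : Multiset ι).count j := by
    rw [← pow_add, ← Multiset.count_add, Multiset.insert_eq_cons, Multiset.singleton_add]
  have hfactor : θ a * conj (θ b) * θ c * conj (θ d) ≠ 1 := by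
    rw [show θ a * conj (θ b) * θ c * conj (θ d) = θ a * θ c * conj (θ b * θ d) by
      rw [map_mul]; ring, hpair, hpair, map_pow]
    exact Complex.I_pow_mul_conj_I_pow_ne_one ((Multiset.count_le_card _ _).trans (by simp))
      ((Multiset.count_le_card _ _).trans (by simp)) hj
  have hM : θ a * conj (θ b) * θ c * conj (θ d) * quarticMoment μ a b c d =
      quarticMoment μ a b c d := by
    refine .trans ?_ (integral_comp_linearIsometryEquiv hinv (phaseRotation θ hθ)
      fun x => x a * conj (x b) * x c * conj (x d))
    simp only [quarticMoment, ← integral_const_mul, phaseRotation_apply, map_mul]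
    congr 1 with x
    ring
  exact (mul_left_eq_self₀.mp hM).resolve_left hfactor

theorem quarticMoment_perm
    (hinv : ∀ U : EuclideanSpace ℂ ι ≃ₗᵢ[ℂ] EuclideanSpace ℂ ι, μ.map U = μ) (e : ι ≃ ι)
    (a b c d : ι) : quarticMoment μ (e a) (e b) (e c) (e d) = quarticMoment μ a b c d := by
  refine (integral_comp_linearIsometryEquiv hinv (.piLpCongrLeft 2 ℂ ℂ e)
    fun x => x (e a) * conj (x (e b)) * x (e c) * conj (x (e d))).symm.trans ?_
  simp [quarticMoment, Equiv.piCongrLeft'_apply]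

theorem quarticMoment_hadamard [DecidableEq ι] [IsFiniteMeasure μ]
    (hinv : ∀ U : EuclideanSpace ℂ ι ≃ₗᵢ[ℂ] EuclideanSpace ℂ ι, μ.map U = μ)
    (hsphere : ∀ᵐ x ∂μ, x ∈ Metric.sphere (0 : EuclideanSpace ℂ ι) 1) {a c : ι} (hac : a ≠ c) :
    4 * quarticMoment μ a a c c = quarticMoment μ a a a a + quarticMoment μ c c c c -
      quarticMoment μ a c a c - quarticMoment μ c a c a := by
  simp only [quarticMoment]
  rw [← integral_comp_linearIsometryEquiv hinv (hadamardRotation a c hac), ← integral_const_mul,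
    ← integral_add, ← integral_sub, ← integral_sub]
  · congr 1 with x
    simp only [hadamardRotation_apply_left, hadamardRotation_apply_right, map_div₀, map_add,
      map_sub, Complex.conj_ofReal]
    linear_combination (4 * ((√2 : ℂ)⁻¹ ^ 2 + 2⁻¹) * (x a + x c) * (x a - x c) *
      (conj (x a) + conj (x c)) * (conj (x a) - conj (x c))) * Complex.inv_sqrt_two_sq
  all_goals exact integrable_of_ae_mem_sphere hsphere (by fun_prop)

theorem sum_quarticMoment_self_self [IsProbabilityMeasure μ]
    (hsphere : ∀ᵐ x ∂μ, x ∈ Metric.sphere (0 : EuclideanSpace ℂ ι) 1) :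
    ∑ a, ∑ c, quarticMoment μ a a c c = 1 := by
  have hone : ∀ᵐ x ∂μ, ∑ a, ∑ c, x a * conj (x a) * x c * conj (x c) = 1 := by
    filter_upwards [hsphere] with x hx
    have hnorm : ∑ a, x a * conj (x a) = 1 := by
      simp_rw [Complex.mul_conj', ← Complex.ofReal_pow, ← Complex.ofReal_sum,
        ← EuclideanSpace.norm_sq_eq, mem_sphere_zero_iff_norm.mp hx]
      simp
    simp_rw [mul_assoc _ (x _), ← mul_sum, ← sum_mul, hnorm, one_mul]
  simp (disch := intro _ _; exact integrable_of_ae_mem_sphere hsphere (by fun_prop)) only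
    [quarticMoment, ← integral_finsetSum]
  rw [integral_congr_ae hone]
  simp

theorem quarticMoment_diag_eq [DecidableEq ι]
    (hinv : ∀ U : EuclideanSpace ℂ ι ≃ₗᵢ[ℂ] EuclideanSpace ℂ ι, μ.map U = μ) (p q : ι) :
    quarticMoment μ p p p p = quarticMoment μ q q q q := by
  simpa using (quarticMoment_perm hinv (Equiv.swap p q) p p p p).symm

theorem quarticMoment_self_self_of_ne [DecidableEq ι] [IsFiniteMeasure μ]
    (hinv : ∀ U : EuclideanSpace ℂ ι ≃ₗᵢ[ℂ] EuclideanSpace ℂ ι, μ.map U = μ)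
    (hsphere : ∀ᵐ x ∂μ, x ∈ Metric.sphere (0 : EuclideanSpace ℂ ι) 1) {p q : ι} (hpq : p ≠ q) :
    quarticMoment μ p p q q = quarticMoment μ p p p p / 2 := by
  have h := quarticMoment_hadamard hinv hsphere hpq
  rw [quarticMoment_diag_eq hinv q p,
    quarticMoment_eq_zero hinv p q p q (mt Multiset.pair_eq_pair_iff.mp (by simp [hpq.symm])),
    quarticMoment_eq_zero hinv q p q p (mt Multiset.pair_eq_pair_iff.mp (by simp [hpq]))] at h
  linear_combination h / 4

theorem quarticMoment_self_self [DecidableEq ι] [IsProbabilityMeasure μ]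
    (hinv : ∀ U : EuclideanSpace ℂ ι ≃ₗᵢ[ℂ] EuclideanSpace ℂ ι, μ.map U = μ)
    (hsphere : ∀ᵐ x ∂μ, x ∈ Metric.sphere (0 : EuclideanSpace ℂ ι) 1) (p q : ι) :
    quarticMoment μ p p q q =
      (1 + if p = q then 1 else 0) / (Fintype.card ι * (Fintype.card ι + 1)) := by
  have h (a c : ι) :
      quarticMoment μ a a c c = (1 + if a = c then 1 else 0) * (quarticMoment μ p p p p / 2) := by
    rcases eq_or_ne a c with rfl | hac
    · rw [if_pos rfl, quarticMoment_diag_eq hinv a p]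
      ring
    · rw [if_neg hac, quarticMoment_self_self_of_ne hinv hsphere hac,
        quarticMoment_diag_eq hinv a p, add_zero, one_mul]
  generalize quarticMoment μ p p p p / 2 = D at h
  have hnorm : D * (Fintype.card ι * (Fintype.card ι + 1)) = 1 := by
    refine .trans ?_ (sum_quarticMoment_self_self hsphere)
    simp only [h, add_mul, one_mul, ite_mul, zero_mul, sum_add_distrib, sum_const, card_univ,
      sum_ite_eq, mem_univ, if_true, nsmul_eq_mul]
    ring
  rw [h, eq_one_div_of_mul_eq_one_left hnorm, mul_one_div]

theorem quarticMoment_eq [DecidableEq ι] [IsProbabilityMeasure μ]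
    (hinv : ∀ U : EuclideanSpace ℂ ι ≃ₗᵢ[ℂ] EuclideanSpace ℂ ι, μ.map U = μ)
    (hsphere : ∀ᵐ x ∂μ, x ∈ Metric.sphere (0 : EuclideanSpace ℂ ι) 1) (a b c d : ι) :
    quarticMoment μ a b c d =
      ((if b = a ∧ d = c then 1 else 0) + (if b = c ∧ d = a then 1 else 0)) /
        (Fintype.card ι * (Fintype.card ι + 1)) := by
  by_cases h1 : b = a ∧ d = c
  · rw [h1.1, h1.2, quarticMoment_self_self hinv hsphere]
    by_cases hac : a = c <;> simp [hac]
  by_cases h2 : b = c ∧ d = a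
  · have hswap : quarticMoment μ a c c a = quarticMoment μ a a c c := by
      simp only [quarticMoment]
      congr 1 with x
      ring
    rw [h2.1, h2.2, hswap, quarticMoment_self_self hinv hsphere]
    by_cases hac : a = c <;> simp [hac]
  rw [quarticMoment_eq_zero hinv a b c d (mt Multiset.pair_eq_pair_iff.mp (not_or.mpr ⟨h1, h2⟩)),
    if_neg h1, if_neg h2, add_zero, zero_div]

noncomputable def quarticForm (T : ι → ι → ι → ι → ℂ) (x : EuclideanSpace ℂ ι) : ℂ :=
  ∑ a, ∑ b, ∑ c, ∑ d, T a b c d * (x a * conj (x b) * x c * conj (x d))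

theorem continuous_quarticForm (T : ι → ι → ι → ι → ℂ) : Continuous (quarticForm T) := by
  unfold quarticForm
  fun_prop

theorem integral_quarticForm [IsProbabilityMeasure μ]
    (hinv : ∀ U : EuclideanSpace ℂ ι ≃ₗᵢ[ℂ] EuclideanSpace ℂ ι, μ.map U = μ)
    (hsphere : ∀ᵐ x ∂μ, x ∈ Metric.sphere (0 : EuclideanSpace ℂ ι) 1)
    (T : ι → ι → ι → ι → ℂ) :
    ∫ x, quarticForm T x ∂μ =
      (∑ a, ∑ c, (T a a c c + T a c c a)) / (Fintype.card ι * (Fintype.card ι + 1)) := by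
  classical
  have hsum : ∫ x, quarticForm T x ∂μ =
      ∑ a, ∑ b, ∑ c, ∑ d, T a b c d * quarticMoment μ a b c d := by
    simp (disch := intro _ _; exact integrable_of_ae_mem_sphere hsphere (by fun_prop)) only
      [quarticForm, integral_finsetSum, integral_const_mul, quarticMoment]
  simp only [hsum, quarticMoment_eq hinv hsphere, mul_div_assoc', mul_add, add_div, sum_add_distrib,
    ← sum_div, mul_ite, mul_one, mul_zero, ite_and, sum_ite_irrel, sum_const_zero, sum_ite_eq,
    sum_ite_eq', mem_univ, if_true]

end EuclideanSpace

theorem OrthonormalBasis.apply_eq_sum_repr_mul {𝕜 V ι : Type*} [RCLike 𝕜] [NormedAddCommGroup V]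
    [InnerProductSpace 𝕜 V] [Fintype ι] (E : OrthonormalBasis ι 𝕜 V) {f : V → 𝕜} (φ : 𝕜 → 𝕜)
    (hadd : ∀ x y, f (x + y) = f x + f y) (hsmul : ∀ (t : 𝕜) x, f (t • x) = φ t * f x) (Z : V) :
    f Z = ∑ i, φ (E.repr Z i) * f (E i) := by
  conv_lhs => rw [← E.sum_repr Z]
  exact (map_sum (AddMonoidHom.mk' f hadd) _ _).trans (by simp [hsmul])

theorem IsKahlerCurvatureTensor.apply_eq_quarticForm {V ι : Type*} [NormedAddCommGroup V]
    [InnerProductSpace ℂ V] [Fintype ι] {R : V → V → V → V → ℂ} (hR : IsKahlerCurvatureTensor R)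
    (E : OrthonormalBasis ι ℂ V) (Z : V) :
    R Z Z Z Z =
      EuclideanSpace.quarticForm (fun a b c d => R (E a) (E b) (E c) (E d)) (E.repr Z) := by
  have h₁ (y z w : V) := E.apply_eq_sum_repr_mul (f := fun x => R x y z w) id
    (hR.map_add₁ · · y z w) (hR.map_smul₁ · · y z w) Z
  have h₂ (x z w : V) := E.apply_eq_sum_repr_mul (f := fun y => R x y z w) conj
    (hR.map_add₂ x · · z w) (hR.map_smul₂ · x · z w) Z
  have h₃ (x y w : V) := E.apply_eq_sum_repr_mul (f := fun z => R x y z w) id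
    (hR.map_add₃ x y · · w) (hR.map_smul₃ · x y · w) Z
  have h₄ (x y z : V) := E.apply_eq_sum_repr_mul (f := fun w => R x y z w) conj
    (hR.map_add₄ x y z · ·) (hR.map_smul₄ · x y z ·) Z
  simp only [id] at h₁ h₃
  rw [h₁]
  simp only [h₂, h₃, h₄, mul_sum, EuclideanSpace.quarticForm]
  refine sum_congr rfl fun a _ => sum_congr rfl fun b _ => sum_congr rfl fun c _ =>
    sum_congr rfl fun d _ => by ring

section Transfer

variable {𝕜 V W : Type*} [RCLike 𝕜] [NormedAddCommGroup V] [InnerProductSpace 𝕜 V]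
  [NormedAddCommGroup W] [InnerProductSpace 𝕜 W] [MeasurableSpace V] [BorelSpace V]
  [MeasurableSpace W] [BorelSpace W] {σ : Measure V}

theorem LinearIsometryEquiv.map_map_measure_eq (e : V ≃ₗᵢ[𝕜] W)
    (hinv : ∀ f : V ≃ₗᵢ[𝕜] V, σ.map f = σ) (U : W ≃ₗᵢ[𝕜] W) :
    (σ.map e).map U = σ.map e := by
  have hT := hinv ((e.trans U).trans e.symm)
  rw [Measure.map_map U.continuous.measurable e.continuous.measurable]
  conv_rhs => rw [← hT, Measure.map_map e.continuous.measurable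
    ((e.trans U).trans e.symm).continuous.measurable]
  congr 1
  ext Z
  simp

theorem LinearIsometryEquiv.ae_mem_sphere_map (e : V ≃ₗᵢ[𝕜] W) {r : ℝ}
    (h : ∀ᵐ Z ∂σ, Z ∈ Metric.sphere (0 : V) r) : ∀ᵐ x ∂σ.map e, x ∈ Metric.sphere (0 : W) r :=
  (ae_map_iff e.continuous.aemeasurable Metric.isClosed_sphere.measurableSet).mpr
    (by simpa using h)

end Transfer

theorem average_holomorphic_sectional_curvature_general
    {V : Type*} [NormedAddCommGroup V] [InnerProductSpace ℂ V]
    [MeasurableSpace V] [BorelSpace V]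
    (k : ℕ) (E : OrthonormalBasis (Fin k) ℂ V)
    (R : V → V → V → V → ℂ) (hR : IsKahlerCurvatureTensor R)
    (σ : Measure V) [IsProbabilityMeasure σ]
    (hsupp : σ (Metric.sphere (0 : V) 1)ᶜ = 0)
    (hinv : ∀ f : V ≃ₗᵢ[ℂ] V, Measure.map f σ = σ) :
    ∫ Z, R Z Z Z Z ∂σ =
      (2 / (k * (k + 1)) : ℂ) * ∑ i : Fin k, ∑ j : Fin k,
        R (E i) (E i) (E j) (E j) := by
  have := Measure.isProbabilityMeasure_map (μ := σ) E.repr.continuous.aemeasurable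
  set T : Fin k → Fin k → Fin k → Fin k → ℂ := fun a b c d => R (E a) (E b) (E c) (E d)
  calc ∫ Z, R Z Z Z Z ∂σ
      = ∫ Z, EuclideanSpace.quarticForm T (E.repr Z) ∂σ :=
        integral_congr_ae (.of_forall (hR.apply_eq_quarticForm E))
    _ = ∫ x, EuclideanSpace.quarticForm T x ∂σ.map E.repr :=
        (integral_map E.repr.continuous.aemeasurable
          (EuclideanSpace.continuous_quarticForm T).aestronglyMeasurable).symm
    _ = (∑ a, ∑ c, (T a a c c + T a c c a)) / (k * (k + 1)) := by
        rw [EuclideanSpace.integral_quarticForm (E.repr.map_map_measure_eq hinv)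
          (E.repr.ae_mem_sphere_map (ae_iff.mpr hsupp)), Fintype.card_fin]
    _ = _ := by
        simp only [T, ← hR.symm₂₄, ← two_mul, ← mul_sum]
        ring

/-- **Sphere average of the holomorphic sectional curvature.** Let `V` be a
`k`-dimensional complex inner product space (`k ≥ 1`) with orthonormal basis
`E`, let `R` be a Kähler curvature-type tensor on `V`, and let `σ` be the
rotation-invariant probability measure on the unit sphere of `V`. Then
`∫ R(Z,Z̄,Z,Z̄) dσ(Z) = (2/(k(k+1))) · Σ_{i,j} R(E_i,Ē_i,E_j,Ē_j)`. -/
theorem average_holomorphic_sectional_curvature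
    {V : Type*} [NormedAddCommGroup V] [InnerProductSpace ℂ V]
    [MeasurableSpace V] [BorelSpace V]
    (k : ℕ) (hk : 1 ≤ k) (E : OrthonormalBasis (Fin k) ℂ V)
    (R : V → V → V → V → ℂ) (hR : IsKahlerCurvatureTensor R)
    (σ : Measure V) [IsProbabilityMeasure σ]
    (hsupp : σ (Metric.sphere (0 : V) 1)ᶜ = 0)
    (hinv : ∀ f : V ≃ₗᵢ[ℂ] V, Measure.map f σ = σ) :
    ∫ Z, R Z Z Z Z ∂σ =
      (2 / (k * (k + 1)) : ℂ) * ∑ i : Fin k, ∑ j : Fin k,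
        R (E i) (E i) (E j) (E j) :=
  average_holomorphic_sectional_curvature_general k E R hR σ hsupp hinv
end

section
/- Let V be a finite-dimensional complex inner product space of dimension n, let R be a Kähler curvature-type tensor on V, and define Ric(Z,Z̄) = Σ_{i=1}^n R(Z,Z̄,F_i,F̄_i) for an orthonormal basis (F_1,…,F_n) of V. Let Σ ⊆ V be a complex k-dimensional subspace (1 ≤ k ≤ n) with orthonormal basis (E_1,…,E_k), let σ denote the rotation-invariant probability measure on the unit sphere of Σ, and set S_k(Σ) = Σ_{i,j=1}^k R(E_i,Ē_i,E_j,Ē_j). Then k · ∫_{unit sphere of Σ} [Ric(Z,Z̄) + R(Z,Z̄,Z,Z̄)] dσ(Z) = Σ_{j=1}^k Ric(E_j,Ē_j) + (2/(k+1)) · S_k(Σ). -/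
open MeasureTheory

/-!
Writing `Z = ∑ zᵢ Eᵢ`, both terms of the integrand are polynomials in the coordinates, so the
integral is a combination of the moments `∫ zᵢ z̄ⱼ dσ` and `∫ zᵢ z̄ⱼ zₖ z̄ₗ dσ`. Invariance of `σ`
under the unitary multiplying one coordinate by `I` kills every moment whose indices do not pair
up; invariance under a reflection mixing two coordinates (with coefficients `-3/5`, `4/5`) shows
that `∫ |zᵢ|⁴` does not depend on `i` and equals `2 ∫ |zᵢ|² |zⱼ|²` for `i ≠ j`. As `∑ |zᵢ|² = 1`
on the sphere, `∫ zᵢ z̄ⱼ = δᵢⱼ / k` and `∫ zᵢ z̄ⱼ zₖ z̄ₗ = (δᵢⱼ δₖₗ + δᵢₗ δₖⱼ) / (k (k + 1))`.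
The symmetry `R(X,Y,Z,W) = R(Z,Y,X,W)` makes both pairings of the quartic term contribute `S_k`.
-/

open ComplexConjugate

namespace IsKahlerCurvatureTensor

variable {V : Type*} [AddCommGroup V] [Module ℂ V] {R : V → V → V → V → ℂ}

theorem map_sum₁ (hR : IsKahlerCurvatureTensor R) {ι : Type*} (s : Finset ι) (f : ι → ℂ)
    (v : ι → V) (y z w : V) :
    R (∑ i ∈ s, f i • v i) y z w = ∑ i ∈ s, f i * R (v i) y z w := by
  classical
  induction s using Finset.induction with
  | empty => simpa using hR.map_smul₁ 0 0 y z w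
  | insert _ _ h ih => rw [Finset.sum_insert h, hR.map_add₁, hR.map_smul₁, ih, Finset.sum_insert h]

theorem map_sum₂ (hR : IsKahlerCurvatureTensor R) {ι : Type*} (s : Finset ι) (f : ι → ℂ)
    (v : ι → V) (x z w : V) :
    R x (∑ i ∈ s, f i • v i) z w = ∑ i ∈ s, conj (f i) * R x (v i) z w := by
  classical
  induction s using Finset.induction with
  | empty => simpa using hR.map_smul₂ 0 x 0 z w
  | insert _ _ h ih => rw [Finset.sum_insert h, hR.map_add₂, hR.map_smul₂, ih, Finset.sum_insert h]

theorem map_sum₃ (hR : IsKahlerCurvatureTensor R) {ι : Type*} (s : Finset ι) (f : ι → ℂ)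
    (v : ι → V) (x y w : V) :
    R x y (∑ i ∈ s, f i • v i) w = ∑ i ∈ s, f i * R x y (v i) w := by
  classical
  induction s using Finset.induction with
  | empty => simpa using hR.map_smul₃ 0 x y 0 w
  | insert _ _ h ih => rw [Finset.sum_insert h, hR.map_add₃, hR.map_smul₃, ih, Finset.sum_insert h]

theorem map_sum₄ (hR : IsKahlerCurvatureTensor R) {ι : Type*} (s : Finset ι) (f : ι → ℂ)
    (v : ι → V) (x y z : V) :
    R x y z (∑ i ∈ s, f i • v i) = ∑ i ∈ s, conj (f i) * R x y z (v i) := by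
  classical
  induction s using Finset.induction with
  | empty => simpa using hR.map_smul₄ 0 x y z 0
  | insert _ _ h ih => rw [Finset.sum_insert h, hR.map_add₄, hR.map_smul₄, ih, Finset.sum_insert h]

theorem apply_sum_sum (hR : IsKahlerCurvatureTensor R) {ι : Type*} [Fintype ι] (f g : ι → ℂ)
    (v : ι → V) (z w : V) :
    R (∑ i, f i • v i) (∑ j, g j • v j) z w
      = ∑ i, ∑ j, f i * conj (g j) * R (v i) (v j) z w := by
  simp only [hR.map_sum₁, hR.map_sum₂, Finset.mul_sum, mul_assoc]

theorem apply_sum_sum_sum_sum (hR : IsKahlerCurvatureTensor R) {ι : Type*} [Fintype ι]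
    (f g p q : ι → ℂ) (v : ι → V) :
    R (∑ i, f i • v i) (∑ j, g j • v j) (∑ k, p k • v k) (∑ l, q l • v l)
      = ∑ i, ∑ j, ∑ k, ∑ l,
          f i * conj (g j) * (p k * conj (q l)) * R (v i) (v j) (v k) (v l) := by
  simp only [hR.apply_sum_sum, hR.map_sum₃, hR.map_sum₄, Finset.mul_sum]
  exact Finset.sum_congr rfl fun _ _ => Finset.sum_congr rfl fun _ _ =>
    Finset.sum_congr rfl fun _ _ => Finset.sum_congr rfl fun _ _ => by ring

end IsKahlerCurvatureTensor

noncomputable def unitaryI : unitary ℂ := ⟨Complex.I, by simp [Unitary.mem_iff]⟩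

theorem coe_mulSingle_unitaryI {ι : Type*} [DecidableEq ι] (e i : ι) :
    (((Pi.mulSingle e unitaryI : ι → unitary ℂ) i : unitary ℂ) : ℂ)
      = if i = e then Complex.I else 1 := by
  by_cases h : i = e <;> simp [h, unitaryI]

section Coordinates

variable {H : Type*} [NormedAddCommGroup H] [InnerProductSpace ℂ H]
  {ι : Type*} [Fintype ι] (b : OrthonormalBasis ι ℂ H)

noncomputable def OrthonormalBasis.diagonalUnitary (θ : ι → unitary ℂ) : H ≃ₗᵢ[ℂ] H :=
  b.repr.trans <| (LinearIsometryEquiv.piLpCongrRight 2 fun i =>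
    θ i • LinearIsometryEquiv.refl ℂ ℂ).trans b.repr.symm

@[simp]
theorem OrthonormalBasis.repr_diagonalUnitary (θ : ι → unitary ℂ) (Z : H) (i : ι) :
    b.repr (b.diagonalUnitary θ Z) i = θ i * b.repr Z i := by
  simp [OrthonormalBasis.diagonalUnitary]

theorem OrthonormalBasis.repr_reflection_apply {i j : ι} (hij : i ≠ j) (Z : H) :
    b.repr ((ℂ ∙ (b i + (2 : ℂ) • b j)).reflection Z) i
      = (4 * b.repr Z j - 3 * b.repr Z i) / 5 := by
  have hn : ‖b i + (2 : ℂ) • b j‖ ^ 2 = 5 := by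
    rw [norm_add_sq (𝕜 := ℂ), inner_smul_right, b.inner_eq_zero hij, norm_smul]
    norm_num
  rw [Submodule.reflection_singleton_apply]
  simp [b.repr_apply_apply, inner_add_left, inner_smul_left, b.inner_eq_zero hij,
    ← Complex.ofReal_pow, hn, map_ofNat]
  ring

theorem OrthonormalBasis.sum_repr_mul_conj (Z : H) :
    ∑ i, b.repr Z i * conj (b.repr Z i) = (‖Z‖ : ℂ) ^ 2 := by
  simp_rw [b.repr_apply_apply, inner_conj_symm, mul_comm (inner ℂ (b _) Z),
    b.sum_inner_mul_inner, inner_self_eq_norm_sq_to_K]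
  rfl

end Coordinates

section UnitarilyInvariant

variable {H : Type*} [NormedAddCommGroup H] [InnerProductSpace ℂ H] [MeasurableSpace H]
  [BorelSpace H] (μ : Measure H)

theorem Continuous.integrable_of_ae_norm_eq_one [FiniteDimensional ℂ H] [IsFiniteMeasure μ]
    (hμ : ∀ᵐ Z ∂μ, ‖Z‖ = 1) {f : H → ℂ} (hf : Continuous f) : Integrable f μ := by
  have hs : μ.restrict (Metric.sphere 0 1) = μ :=
    Measure.restrict_eq_self_of_ae_mem (by simpa using hμ)
  rw [← hs]
  exact hf.continuousOn.integrableOn_compact (isCompact_sphere 0 1)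

theorem integral_finset_sum_of_continuous [FiniteDimensional ℂ H] [IsFiniteMeasure μ]
    (hμ : ∀ᵐ Z ∂μ, ‖Z‖ = 1) {κ : Type*} (s : Finset κ) {f : κ → H → ℂ}
    (hf : ∀ i, Continuous (f i)) : ∫ Z, ∑ i ∈ s, f i Z ∂μ = ∑ i ∈ s, ∫ Z, f i Z ∂μ :=
  integral_finsetSum s fun i _ => (hf i).integrable_of_ae_norm_eq_one μ hμ

theorem integral_comp_linearIsometryEquiv (hinv : ∀ U : H ≃ₗᵢ[ℂ] H, μ.map U = μ)
    (U : H ≃ₗᵢ[ℂ] H) (f : H → ℂ) : ∫ Z, f (U Z) ∂μ = ∫ Z, f Z ∂μ :=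
  MeasurePreserving.integral_comp ⟨U.continuous.measurable, hinv U⟩
    U.toHomeomorph.measurableEmbedding f

theorem integral_eq_zero_of_comp_eq_mul (hinv : ∀ U : H ≃ₗᵢ[ℂ] H, μ.map U = μ)
    (U : H ≃ₗᵢ[ℂ] H) {f : H → ℂ} {c : ℂ} (hc : c ≠ 1) (hf : ∀ Z, f (U Z) = c * f Z) :
    ∫ Z, f Z ∂μ = 0 := by
  have h := integral_comp_linearIsometryEquiv μ hinv U f
  simp only [hf, integral_const_mul] at h
  have h' : (c - 1) * ∫ Z, f Z ∂μ = 0 := by linear_combination h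
  exact (mul_eq_zero.1 h').resolve_left (sub_ne_zero.2 hc)

end UnitarilyInvariant

section Moments

variable {H : Type*} [NormedAddCommGroup H] [InnerProductSpace ℂ H] [MeasurableSpace H]
  (μ : Measure H) {ι : Type*} [Fintype ι] (b : OrthonormalBasis ι ℂ H)

noncomputable def secondMoment (i j : ι) : ℂ :=
  ∫ Z, b.repr Z i * conj (b.repr Z j) ∂μ

noncomputable def fourthMoment (i j k l : ι) : ℂ :=
  ∫ Z, b.repr Z i * conj (b.repr Z j) * (b.repr Z k * conj (b.repr Z l)) ∂μ

theorem fourthMoment_comm (i j k l : ι) : fourthMoment μ b i j k l = fourthMoment μ b k l i j :=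
  integral_congr_ae <| .of_forall fun _ => by ring

theorem fourthMoment_swap (i j k l : ι) : fourthMoment μ b i j k l = fourthMoment μ b i l k j :=
  integral_congr_ae <| .of_forall fun _ => by ring

variable [BorelSpace H]

theorem secondMoment_eq_zero (hinv : ∀ U : H ≃ₗᵢ[ℂ] H, μ.map U = μ) {i j : ι} (hij : i ≠ j) :
    secondMoment μ b i j = 0 := by
  classical
  refine integral_eq_zero_of_comp_eq_mul μ hinv (b.diagonalUnitary (Pi.mulSingle i unitaryI))
    (c := Complex.I) (by simp [Complex.ext_iff]) fun Z => ?_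
  simp only [b.repr_diagonalUnitary, coe_mulSingle_unitaryI, if_neg hij.symm, if_true, map_mul,
    map_one]
  ring

theorem fourthMoment_eq_zero (hinv : ∀ U : H ≃ₗᵢ[ℂ] H, μ.map U = μ) {i j k l : ι}
    (h₁ : ¬(i = j ∧ k = l)) (h₂ : ¬(i = l ∧ k = j)) : fourthMoment μ b i j k l = 0 := by
  classical
  let φ (e x : ι) : ℂ := if x = e then Complex.I else 1
  -- multiplying the `e`-th coordinate by `I` multiplies the integrand by this factor
  obtain ⟨e, he⟩ : ∃ e, φ e i * conj (φ e j) * φ e k * conj (φ e l) ≠ 1 := by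
    by_cases hij : i = j
    · subst hij
      refine ⟨k, ?_⟩
      have hlk : l ≠ k := fun h => h₁ ⟨rfl, h.symm⟩
      by_cases hik : i = k <;> simp [φ, hik, hlk, Complex.ext_iff]
    by_cases hil : i = l
    · subst hil
      refine ⟨j, ?_⟩
      have hkj : k ≠ j := fun h => h₂ ⟨rfl, h⟩
      simp [φ, hij, hkj, Complex.ext_iff]
    refine ⟨i, ?_⟩
    by_cases hki : k = i <;> norm_num [φ, Ne.symm hij, Ne.symm hil, hki, Complex.ext_iff]
  refine integral_eq_zero_of_comp_eq_mul μ hinv (b.diagonalUnitary (Pi.mulSingle e unitaryI))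
    he fun Z => ?_
  simp only [b.repr_diagonalUnitary, coe_mulSingle_unitaryI, map_mul, φ]
  ring

variable [FiniteDimensional ℂ H] [IsProbabilityMeasure μ]

theorem secondMoment_eq_sum_of_repr_eq (hμ : ∀ᵐ Z ∂μ, ‖Z‖ = 1)
    (hinv : ∀ U : H ≃ₗᵢ[ℂ] H, μ.map U = μ) (U : H ≃ₗᵢ[ℂ] H) {κ : Type*} [Fintype κ]
    (p : κ → ι) (v : κ → ℂ) (i : ι) (hU : ∀ Z, b.repr (U Z) i = ∑ s, v s * b.repr Z (p s)) :
    secondMoment μ b i i = ∑ s, ∑ t, v s * conj (v t) * secondMoment μ b (p s) (p t) := by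
  have hexp : ∀ Z, b.repr (U Z) i * conj (b.repr (U Z) i)
      = ∑ s, ∑ t, v s * conj (v t) * (b.repr Z (p s) * conj (b.repr Z (p t))) := fun Z => by
    simp only [hU, map_sum, map_mul, Finset.sum_mul_sum]
    exact Finset.sum_congr rfl fun _ _ => Finset.sum_congr rfl fun _ _ => by ring
  rw [secondMoment, ← integral_comp_linearIsometryEquiv μ hinv U]
  simp (disch := intro; fun_prop) only [hexp, integral_finset_sum_of_continuous μ hμ,
    integral_const_mul, secondMoment]

theorem fourthMoment_eq_sum_of_repr_eq (hμ : ∀ᵐ Z ∂μ, ‖Z‖ = 1)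
    (hinv : ∀ U : H ≃ₗᵢ[ℂ] H, μ.map U = μ) (U : H ≃ₗᵢ[ℂ] H) {κ : Type*} [Fintype κ]
    (p : κ → ι) (v : κ → ℂ) (i : ι) (hU : ∀ Z, b.repr (U Z) i = ∑ s, v s * b.repr Z (p s)) :
    fourthMoment μ b i i i i = ∑ s, ∑ t, ∑ u, ∑ w,
      v s * conj (v t) * v u * conj (v w) * fourthMoment μ b (p s) (p t) (p u) (p w) := by
  have hexp : ∀ Z,
      b.repr (U Z) i * conj (b.repr (U Z) i) * (b.repr (U Z) i * conj (b.repr (U Z) i))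
      = ∑ s, ∑ t, ∑ u, ∑ w, v s * conj (v t) * v u * conj (v w) *
          (b.repr Z (p s) * conj (b.repr Z (p t)) * (b.repr Z (p u) * conj (b.repr Z (p w)))) :=
    fun Z => by
    simp only [hU, map_sum, map_mul, Finset.sum_mul_sum]
    refine Finset.sum_congr rfl fun _ _ => ?_
    rw [Finset.sum_comm]
    exact Finset.sum_congr rfl fun _ _ => Finset.sum_congr rfl fun _ _ =>
      Finset.sum_congr rfl fun _ _ => by ring
  rw [fourthMoment, ← integral_comp_linearIsometryEquiv μ hinv U]
  simp (disch := intro; fun_prop) only [hexp, integral_finset_sum_of_continuous μ hμ,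
    integral_const_mul, fourthMoment]

theorem secondMoment_self_eq (hμ : ∀ᵐ Z ∂μ, ‖Z‖ = 1) (hinv : ∀ U : H ≃ₗᵢ[ℂ] H, μ.map U = μ)
    {i j : ι} (hij : i ≠ j) : secondMoment μ b i i = secondMoment μ b j j := by
  have h := secondMoment_eq_sum_of_repr_eq μ b hμ hinv (ℂ ∙ (b i + (2 : ℂ) • b j)).reflection
    ![i, j] ![-3 / 5, 4 / 5] i fun Z => by simp [b.repr_reflection_apply hij]; ring
  simp [Fin.sum_univ_two, map_ofNat, secondMoment_eq_zero μ b hinv hij,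
    secondMoment_eq_zero μ b hinv hij.symm] at h
  linear_combination (25 / 16) * h

/-- `∫ |zᵢ|⁴ = ∫ |(4 zⱼ - 3 zᵢ) / 5|⁴`, once the unpaired moments are discarded. -/
theorem fourthMoment_reflection (hμ : ∀ᵐ Z ∂μ, ‖Z‖ = 1) (hinv : ∀ U : H ≃ₗᵢ[ℂ] H, μ.map U = μ)
    {i j : ι} (hij : i ≠ j) :
    544 * fourthMoment μ b i i i i = 256 * fourthMoment μ b j j j j
      + 576 * fourthMoment μ b i i j j := by
  have h := fourthMoment_eq_sum_of_repr_eq μ b hμ hinv (ℂ ∙ (b i + (2 : ℂ) • b j)).reflection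
    ![i, j] ![-3 / 5, 4 / 5] i fun Z => by simp [b.repr_reflection_apply hij]; ring
  simp [Fin.sum_univ_two, map_ofNat, fourthMoment_eq_zero μ b hinv, hij, hij.symm] at h
  linear_combination 625 * h + 144 * (fourthMoment_swap μ b i j j i
    + (fourthMoment_comm μ b j i i j).trans (fourthMoment_swap μ b i j j i)
    + fourthMoment_comm μ b j j i i)

theorem fourthMoment_self_eq (hμ : ∀ᵐ Z ∂μ, ‖Z‖ = 1) (hinv : ∀ U : H ≃ₗᵢ[ℂ] H, μ.map U = μ)
    (i j : ι) : fourthMoment μ b i i i i = fourthMoment μ b j j j j := by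
  rcases eq_or_ne i j with rfl | hij
  · rfl
  linear_combination (fourthMoment_reflection μ b hμ hinv hij
    - fourthMoment_reflection μ b hμ hinv hij.symm - 576 * fourthMoment_comm μ b j j i i) / 800

theorem two_mul_fourthMoment_pair_of_ne (hμ : ∀ᵐ Z ∂μ, ‖Z‖ = 1)
    (hinv : ∀ U : H ≃ₗᵢ[ℂ] H, μ.map U = μ) {i j : ι} (hij : i ≠ j) :
    2 * fourthMoment μ b i i j j = fourthMoment μ b i i i i := by
  linear_combination (-17 / 7200) * fourthMoment_reflection μ b hμ hinv hij
    - 1 / 900 * fourthMoment_reflection μ b hμ hinv hij.symm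
    - 16 / 25 * fourthMoment_comm μ b j j i i

theorem two_mul_fourthMoment_pair [DecidableEq ι] (hμ : ∀ᵐ Z ∂μ, ‖Z‖ = 1)
    (hinv : ∀ U : H ≃ₗᵢ[ℂ] H, μ.map U = μ) (i₀ i k : ι) :
    2 * fourthMoment μ b i i k k
      = (1 + if i = k then 1 else 0) * fourthMoment μ b i₀ i₀ i₀ i₀ := by
  rw [fourthMoment_self_eq μ b hμ hinv i₀ i]
  rcases eq_or_ne i k with rfl | hik
  · rw [if_pos rfl]; ring
  · simp [hik, two_mul_fourthMoment_pair_of_ne μ b hμ hinv hik]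

theorem two_mul_fourthMoment [DecidableEq ι] (hμ : ∀ᵐ Z ∂μ, ‖Z‖ = 1)
    (hinv : ∀ U : H ≃ₗᵢ[ℂ] H, μ.map U = μ) (i₀ i j k l : ι) :
    2 * fourthMoment μ b i j k l = ((if i = j ∧ k = l then 1 else 0)
      + (if i = l ∧ k = j then 1 else 0)) * fourthMoment μ b i₀ i₀ i₀ i₀ := by
  by_cases h₁ : i = j ∧ k = l
  · obtain ⟨rfl, rfl⟩ := h₁
    simpa [eq_comm] using two_mul_fourthMoment_pair μ b hμ hinv i₀ i k
  by_cases h₂ : i = l ∧ k = j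
  · obtain ⟨rfl, rfl⟩ := h₂
    have hik : i ≠ k := fun h => h₁ ⟨h, h.symm⟩
    simpa [hik, fourthMoment_swap μ b i k k i] using
      two_mul_fourthMoment_pair μ b hμ hinv i₀ i k
  simp [h₁, h₂, fourthMoment_eq_zero μ b hinv h₁ h₂]

theorem sum_secondMoment_self (hμ : ∀ᵐ Z ∂μ, ‖Z‖ = 1) : ∑ i, secondMoment μ b i i = 1 := by
  calc ∑ i, secondMoment μ b i i = ∫ Z, ∑ i, b.repr Z i * conj (b.repr Z i) ∂μ :=
        (integral_finset_sum_of_continuous μ hμ _ fun _ => by fun_prop).symm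
    _ = ∫ _, 1 ∂μ := integral_congr_ae <| hμ.mono fun Z hZ => by
        dsimp only; rw [b.sum_repr_mul_conj, hZ]; simp
    _ = 1 := by simp

theorem sum_fourthMoment_pair (hμ : ∀ᵐ Z ∂μ, ‖Z‖ = 1) :
    ∑ i, ∑ k, fourthMoment μ b i i k k = 1 := by
  calc ∑ i, ∑ k, fourthMoment μ b i i k k
      = ∫ Z, ∑ i, ∑ k, b.repr Z i * conj (b.repr Z i) * (b.repr Z k * conj (b.repr Z k)) ∂μ := by
        simp (disch := intro; fun_prop) only [integral_finset_sum_of_continuous μ hμ,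
          fourthMoment]
    _ = ∫ _, 1 ∂μ := integral_congr_ae <| hμ.mono fun Z hZ => by
        dsimp only; rw [← Finset.sum_mul_sum, b.sum_repr_mul_conj, hZ]; simp
    _ = 1 := by simp

theorem card_mul_secondMoment_self (hμ : ∀ᵐ Z ∂μ, ‖Z‖ = 1)
    (hinv : ∀ U : H ≃ₗᵢ[ℂ] H, μ.map U = μ) (i : ι) :
    Fintype.card ι * secondMoment μ b i i = 1 := by
  have hconst : ∀ j, secondMoment μ b j j = secondMoment μ b i i := fun j => by
    rcases eq_or_ne j i with rfl | hji
    · rfl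
    · exact secondMoment_self_eq μ b hμ hinv hji
  simpa [hconst] using sum_secondMoment_self μ b hμ

theorem card_mul_card_add_one_mul_fourthMoment_self (hμ : ∀ᵐ Z ∂μ, ‖Z‖ = 1)
    (hinv : ∀ U : H ≃ₗᵢ[ℂ] H, μ.map U = μ) (i₀ : ι) :
    Fintype.card ι * (Fintype.card ι + 1) * fourthMoment μ b i₀ i₀ i₀ i₀ = 2 := by
  classical
  have h := congrArg (2 * ·) (sum_fourthMoment_pair μ b hμ)
  simp only [Finset.mul_sum, two_mul_fourthMoment_pair μ b hμ hinv i₀] at h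
  simp [add_mul, Finset.sum_add_distrib] at h
  linear_combination h

theorem card_mul_secondMoment [DecidableEq ι] (hμ : ∀ᵐ Z ∂μ, ‖Z‖ = 1)
    (hinv : ∀ U : H ≃ₗᵢ[ℂ] H, μ.map U = μ) (i j : ι) :
    Fintype.card ι * secondMoment μ b i j = if i = j then 1 else 0 := by
  split_ifs with hij
  · exact hij ▸ card_mul_secondMoment_self μ b hμ hinv i
  · rw [secondMoment_eq_zero μ b hinv hij, mul_zero]

theorem card_mul_card_add_one_mul_fourthMoment [DecidableEq ι] (hμ : ∀ᵐ Z ∂μ, ‖Z‖ = 1)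
    (hinv : ∀ U : H ≃ₗᵢ[ℂ] H, μ.map U = μ) (i j k l : ι) :
    Fintype.card ι * (Fintype.card ι + 1) * fourthMoment μ b i j k l
      = (if i = j ∧ k = l then 1 else 0) + (if i = l ∧ k = j then 1 else 0) := by
  linear_combination Fintype.card ι * (Fintype.card ι + 1) / 2
      * two_mul_fourthMoment μ b hμ hinv i i j k l
    + ((if i = j ∧ k = l then 1 else 0) + (if i = l ∧ k = j then 1 else 0)) / 2
      * card_mul_card_add_one_mul_fourthMoment_self μ b hμ hinv i

theorem card_mul_integral_quadratic (hμ : ∀ᵐ Z ∂μ, ‖Z‖ = 1)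
    (hinv : ∀ U : H ≃ₗᵢ[ℂ] H, μ.map U = μ) (T : ι → ι → ℂ) :
    Fintype.card ι * ∫ Z, ∑ i, ∑ j, b.repr Z i * conj (b.repr Z j) * T i j ∂μ = ∑ i, T i i := by
  classical
  have hint : ∫ Z, ∑ i, ∑ j, b.repr Z i * conj (b.repr Z j) * T i j ∂μ
      = ∑ i, ∑ j, secondMoment μ b i j * T i j := by
    simp (disch := intro; fun_prop) only [integral_finset_sum_of_continuous μ hμ,
      integral_mul_const, secondMoment]
  rw [hint]
  simp [Finset.mul_sum, ← mul_assoc, card_mul_secondMoment μ b hμ hinv]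

theorem card_mul_card_add_one_mul_integral_quartic (hμ : ∀ᵐ Z ∂μ, ‖Z‖ = 1)
    (hinv : ∀ U : H ≃ₗᵢ[ℂ] H, μ.map U = μ) (T : ι → ι → ι → ι → ℂ) :
    Fintype.card ι * (Fintype.card ι + 1) * ∫ Z, ∑ i, ∑ j, ∑ k, ∑ l,
        b.repr Z i * conj (b.repr Z j) * (b.repr Z k * conj (b.repr Z l)) * T i j k l ∂μ
      = ∑ i, ∑ k, T i i k k + ∑ i, ∑ k, T i k k i := by
  classical
  have hint : ∫ Z, ∑ i, ∑ j, ∑ k, ∑ l,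
        b.repr Z i * conj (b.repr Z j) * (b.repr Z k * conj (b.repr Z l)) * T i j k l ∂μ
      = ∑ i, ∑ j, ∑ k, ∑ l, fourthMoment μ b i j k l * T i j k l := by
    simp (disch := intro; fun_prop) only [integral_finset_sum_of_continuous μ hμ,
      integral_mul_const, fourthMoment]
  rw [hint]
  simp only [Finset.mul_sum, ← mul_assoc, card_mul_card_add_one_mul_fourthMoment μ b hμ hinv]
  simp [add_mul, ite_and, Finset.sum_add_distrib]

end Moments

theorem S_k_plus_eq_trace_add_general
    {V : Type*} [NormedAddCommGroup V] [InnerProductSpace ℂ V]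
    (n k : ℕ)
    (F : OrthonormalBasis (Fin n) ℂ V)
    (R : V → V → V → V → ℂ) (hR : IsKahlerCurvatureTensor R)
    (K : Submodule ℂ V) (E : OrthonormalBasis (Fin k) ℂ K)
    [MeasurableSpace K] [BorelSpace K]
    (σ : Measure K) [IsProbabilityMeasure σ]
    (hsupp : σ (Metric.sphere (0 : K) 1)ᶜ = 0)
    (hinv : ∀ f : K ≃ₗᵢ[ℂ] K, Measure.map f σ = σ) :
    (k : ℂ) * ∫ Z : K, ((∑ i : Fin n, R Z Z (F i) (F i)) + R Z Z Z Z) ∂σ =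
      (∑ j : Fin k, ∑ i : Fin n, R (E j) (E j) (F i) (F i)) +
        (2 / ((k : ℂ) + 1)) * ∑ i : Fin k, ∑ j : Fin k,
          R (E i) (E i) (E j) (E j) := by
  have : FiniteDimensional ℂ K := E.toBasis.finiteDimensional_of_finite
  have hσ : ∀ᵐ Z ∂σ, ‖Z‖ = 1 := Filter.Eventually.mono (mem_ae_iff.2 hsupp) fun Z hZ => by
    simpa using hZ
  have hZ : ∀ Z : K, (Z : V) = ∑ a, E.repr Z a • (E a : V) := fun Z => by
    simpa using congrArg Subtype.val (E.sum_repr Z).symm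
  have hexp : ∀ Z : K, (∑ i, R Z Z (F i) (F i)) + R Z Z Z Z
      = (∑ a, ∑ c, E.repr Z a * conj (E.repr Z c) * ∑ i, R (E a) (E c) (F i) (F i))
        + ∑ a, ∑ b, ∑ c, ∑ d, E.repr Z a * conj (E.repr Z b) * (E.repr Z c * conj (E.repr Z d))
            * R (E a) (E b) (E c) (E d) := fun Z => by
    rw [hZ Z, hR.apply_sum_sum_sum_sum]
    simp only [hR.apply_sum_sum, Finset.mul_sum]
    rw [Finset.sum_comm]
    simp only [Finset.sum_comm (γ := Fin n)]
  have hquad := card_mul_integral_quadratic σ E hσ hinv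
    fun a c => ∑ i, R (E a) (E c) (F i) (F i)
  have hquart := card_mul_card_add_one_mul_integral_quartic σ E hσ hinv
    fun a b c d => R (E a) (E b) (E c) (E d)
  have hsymm : ∑ i, ∑ j, R (E i) (E j) (E j) (E i) = ∑ i, ∑ j, R (E i) (E i) (E j) (E j) := by
    rw [Finset.sum_comm]
    exact Finset.sum_congr rfl fun _ _ => Finset.sum_congr rfl fun _ _ => hR.symm₁₃ _ _ _ _
  rw [Fintype.card_fin] at hquad
  rw [Fintype.card_fin, hsymm] at hquart
  simp only [hexp]
  rw [integral_add (Continuous.integrable_of_ae_norm_eq_one σ hσ (by fun_prop))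
    (Continuous.integrable_of_ae_norm_eq_one σ hσ (by fun_prop)), mul_add, hquad]
  congr 1
  rw [div_mul_eq_mul_div, eq_div_iff (by exact_mod_cast k.succ_ne_zero)]
  linear_combination hquart

/-- **Equation (2) of the paper: the identity for `S_k^+`.** Let `V` be an
`n`-dimensional complex inner product space with orthonormal basis `F`, let `R`
be a Kähler curvature-type tensor on `V` with Ricci form
`Ric(Z,Z̄) = Σ_i R(Z,Z̄,F_i,F̄_i)`. Let `K ⊆ V` be a complex `k`-dimensional
subspace (`1 ≤ k ≤ n`) with orthonormal basis `E`, let `σ` be the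
rotation-invariant probability measure on the unit sphere of `K`, and let
`S_k(K) = Σ_{i,j} R(E_i,Ē_i,E_j,Ē_j)`. Then
`k · ∫ [Ric(Z,Z̄) + R(Z,Z̄,Z,Z̄)] dσ(Z) = Σ_j Ric(E_j,Ē_j) + (2/(k+1)) S_k(K)`. -/
theorem S_k_plus_eq_trace_add
    {V : Type*} [NormedAddCommGroup V] [InnerProductSpace ℂ V]
    (n k : ℕ) (hk : 1 ≤ k) (hkn : k ≤ n)
    (F : OrthonormalBasis (Fin n) ℂ V)
    (R : V → V → V → V → ℂ) (hR : IsKahlerCurvatureTensor R)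
    (K : Submodule ℂ V) (E : OrthonormalBasis (Fin k) ℂ K)
    [MeasurableSpace K] [BorelSpace K]
    (σ : Measure K) [IsProbabilityMeasure σ]
    (hsupp : σ (Metric.sphere (0 : K) 1)ᶜ = 0)
    (hinv : ∀ f : K ≃ₗᵢ[ℂ] K, Measure.map f σ = σ) :
    (k : ℂ) * ∫ Z : K, ((∑ i : Fin n, R Z Z (F i) (F i)) + R Z Z Z Z) ∂σ =
      (∑ j : Fin k, ∑ i : Fin n, R (E j) (E j) (F i) (F i)) +
        (2 / ((k : ℂ) + 1)) * ∑ i : Fin k, ∑ j : Fin k,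
          R (E i) (E i) (E j) (E j) :=
  S_k_plus_eq_trace_add_general n k F R hR K E σ hsupp hinv
end

section
/- Let k ≥ 1, let V be a complex inner product space of dimension k with orthonormal basis (E_1,…,E_k), let R be a Kähler curvature-type tensor on V, and set S_k = Σ_{i,j=1}^k R(E_i,Ē_i,E_j,Ē_j). Let σ denote the rotation-invariant probability measure on the unit sphere of V. Then ∫ [Σ_{j=1}^k R(Z,Z̄,E_j,Ē_j) − R(Z,Z̄,Z,Z̄)] dσ(Z) = ((k−1)/(k(k+1))) · S_k. -/
/-!
Write `z = E.repr Z`. Expanding `R` in the basis `E` reduces the integrand to the moments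
`∫ z_a z̄_b` and `∫ z_a z̄_b z_c z̄_d`, which unitary invariance of `σ` determines. Diagonal phase
rotations kill every moment whose indices do not pair up. A unitary sending `E_p` to `w / ‖w‖`
shows that `⟪w, Z⟫` has the law of `‖w‖ z_p`, so `∫ |z_p|²` and `∫ |z_p|⁴` do not depend on `p`,
and averaging over `w = E_p + t E_q`, `t ∈ {±1, ±i}`, gives `∫ |z_p|⁴ = 2 ∫ |z_p|² |z_q|²`.
With `∑ |z_c|² = 1` on the sphere this yields `∫ z_a z̄_b = δ_ab / k` and
`∫ z_a z̄_b z_c z̄_d = (δ_ab δ_cd + δ_ad δ_cb) / (k (k + 1))`, so the Ricci term averages to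
`S_k / k` and `R(Z,Z̄,Z,Z̄)` to `2 S_k / (k (k + 1))`.
-/

open MeasureTheory

open Finset ComplexConjugate

open scoped InnerProductSpace

theorem integrable_of_ae_mem_sphere {W F : Type*} [NormedAddCommGroup W] [ProperSpace W]
    [MeasurableSpace W] [BorelSpace W] [NormedAddCommGroup F] {σ : Measure W} [IsFiniteMeasure σ]
    (hσ : ∀ᵐ Z ∂σ, Z ∈ Metric.sphere (0 : W) 1) {f : W → F} (hf : Continuous f) :
    Integrable f σ := by
  rw [← Measure.restrict_eq_self_of_ae_mem hσ]
  exact hf.continuousOn.integrableOn_compact (isCompact_sphere 0 1)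

section

variable {ι V : Type*} [Fintype ι] [NormedAddCommGroup V] [InnerProductSpace ℂ V]

theorem LinearMap.apply_eq_sum_repr_mul_conj_repr (B : V →ₗ[ℂ] V →ₗ⋆[ℂ] ℂ)
    (E : OrthonormalBasis ι ℂ V) (x y : V) :
    B x y = ∑ a, ∑ b, E.repr x a * conj (E.repr y b) * B (E a) (E b) := by
  conv_lhs => rw [← E.sum_repr x, ← E.sum_repr y]
  simp only [map_sum, LinearMap.map_smulₛₗ, LinearMap.sum_apply, LinearMap.smul_apply,
    smul_eq_mul, RingHom.id_apply, mul_sum]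
  rw [sum_comm]
  exact sum_congr rfl fun a _ => sum_congr rfl fun b _ => by ring

theorem OrthonormalBasis.sum_repr_mul_conj_repr (E : OrthonormalBasis ι ℂ V) (Z : V) :
    ∑ a, E.repr Z a * conj (E.repr Z a) = (‖Z‖ : ℂ) ^ 2 := by
  calc ∑ a, E.repr Z a * conj (E.repr Z a) = ∑ a, ⟪Z, E a⟫_ℂ * ⟪E a, Z⟫_ℂ :=
        sum_congr rfl fun a _ => by rw [E.repr_apply_apply, inner_conj_symm, mul_comm]
    _ = (‖Z‖ : ℂ) ^ 2 := by rw [E.sum_inner_mul_inner, inner_self_eq_norm_sq_to_K]; rfl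

theorem OrthonormalBasis.exists_eq_on (E : OrthonormalBasis ι ℂ V) {s : Set ι} {v : ι → V}
    (hv : Orthonormal ℂ (s.domRestrict v)) :
    ∃ F : OrthonormalBasis ι ℂ V, ∀ i ∈ s, F i = v i :=
  have := E.toBasis.finiteDimensional_of_finite
  hv.exists_orthonormalBasis_extension_of_card_eq (Module.finrank_eq_card_basis E.toBasis)

namespace IsKahlerCurvatureTensor

variable {R : V → V → V → V → ℂ}

def sesqForm₁₂ (hR : IsKahlerCurvatureTensor R) (z w : V) : V →ₗ[ℂ] V →ₗ⋆[ℂ] ℂ :=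
  LinearMap.mk₂'ₛₗ _ _ (fun x y => R x y z w) (fun _ _ _ => hR.map_add₁ _ _ _ _ _)
    (fun _ _ _ => hR.map_smul₁ _ _ _ _ _) (fun _ _ _ => hR.map_add₂ _ _ _ _ _)
    (fun _ _ _ => hR.map_smul₂ _ _ _ _ _)

def sesqForm₃₄ (hR : IsKahlerCurvatureTensor R) (x y : V) : V →ₗ[ℂ] V →ₗ⋆[ℂ] ℂ :=
  LinearMap.mk₂'ₛₗ _ _ (fun z w => R x y z w) (fun _ _ _ => hR.map_add₃ _ _ _ _ _)
    (fun _ _ _ => hR.map_smul₃ _ _ _ _ _) (fun _ _ _ => hR.map_add₄ _ _ _ _ _)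
    (fun _ _ _ => hR.map_smul₄ _ _ _ _ _)

@[simp]
theorem sesqForm₁₂_apply (hR : IsKahlerCurvatureTensor R) (x y z w : V) :
    hR.sesqForm₁₂ z w x y = R x y z w :=
  rfl

@[simp]
theorem sesqForm₃₄_apply (hR : IsKahlerCurvatureTensor R) (x y z w : V) :
    hR.sesqForm₃₄ x y z w = R x y z w :=
  rfl

theorem apply_eq_sum (hR : IsKahlerCurvatureTensor R) (E : OrthonormalBasis ι ℂ V)
    (x y z w : V) :
    R x y z w = ∑ a, ∑ b, ∑ c, ∑ d, E.repr x a * conj (E.repr y b) * E.repr z c *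
      conj (E.repr w d) * R (E a) (E b) (E c) (E d) := by
  rw [← hR.sesqForm₁₂_apply, LinearMap.apply_eq_sum_repr_mul_conj_repr _ E]
  refine sum_congr rfl fun a _ => sum_congr rfl fun b _ => ?_
  rw [sesqForm₁₂_apply, ← hR.sesqForm₃₄_apply, LinearMap.apply_eq_sum_repr_mul_conj_repr _ E]
  simp only [sesqForm₃₄_apply, mul_sum]
  exact sum_congr rfl fun c _ => sum_congr rfl fun d _ => by ring

theorem continuous_comp [FiniteDimensional ℂ V] (hR : IsKahlerCurvatureTensor R) {X : Type*}
    [TopologicalSpace X] {f g h w : X → V} (hf : Continuous f) (hg : Continuous g)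
    (hh : Continuous h) (hw : Continuous w) :
    Continuous fun x => R (f x) (g x) (h x) (w x) := by
  have hexp := fun x => hR.apply_eq_sum (stdOrthonormalBasis ℂ V) (f x) (g x) (h x) (w x)
  simp only [hexp]
  fun_prop

end IsKahlerCurvatureTensor

section UnitarilyInvariant

variable [MeasurableSpace V] {σ : Measure V}

noncomputable def quarticMoment (σ : Measure V) (E : OrthonormalBasis ι ℂ V) (a b c d : ι) : ℂ :=
  ∫ Z, E.repr Z a * conj (E.repr Z b) * E.repr Z c * conj (E.repr Z d) ∂σ

theorem quarticMoment_comm (E : OrthonormalBasis ι ℂ V) (a b c d : ι) :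
    quarticMoment σ E a b c d = quarticMoment σ E a d c b := by
  unfold quarticMoment
  congr 1 with Z
  ring

variable [BorelSpace V]

theorem integral_comp_repr_eq (hinv : ∀ U : V ≃ₗᵢ[ℂ] V, σ.map U = σ)
    (E F : OrthonormalBasis ι ℂ V) (G : (ι → ℂ) → ℂ) :
    ∫ Z, G (fun i => F.repr Z i) ∂σ = ∫ Z, G (fun i => E.repr Z i) ∂σ := by
  set U : V ≃ₗᵢ[ℂ] V := F.repr.trans E.repr.symm
  have hU : ∀ Z, E.repr (U Z) = F.repr Z := fun Z => E.repr.apply_symm_apply _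
  have hmap : ∫ Z, G (fun i => E.repr Z i) ∂σ.map U = ∫ Z, G (fun i => E.repr (U Z) i) ∂σ :=
    U.toHomeomorph.measurableEmbedding.integral_map _
  rw [hinv U] at hmap
  simp only [hmap, hU]

theorem integral_comp_phase (hinv : ∀ U : V ≃ₗᵢ[ℂ] V, σ.map U = σ)
    (E : OrthonormalBasis ι ℂ V) {u : ι → ℂ} (hu : ∀ i, ‖u i‖ = 1) (G : (ι → ℂ) → ℂ) :
    ∫ Z, G (fun i => u i * E.repr Z i) ∂σ = ∫ Z, G (fun i => E.repr Z i) ∂σ := by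
  classical
  have hv : Orthonormal ℂ fun i => conj (u i) • E i := by
    rw [orthonormal_iff_ite]
    intro i j
    rw [inner_smul_left, inner_smul_right, E.inner_eq_ite]
    split_ifs with hij
    · subst hij
      simp [Complex.mul_conj, Complex.normSq_eq_norm_sq, hu]
    · simp
  obtain ⟨F, hF⟩ := E.exists_eq_on (s := Set.univ) (v := fun i => conj (u i) • E i)
    (hv.comp _ Subtype.val_injective)
  have hFE : ∀ Z i, F.repr Z i = u i * E.repr Z i := fun Z i => by
    rw [F.repr_apply_apply, hF i (Set.mem_univ i), inner_smul_left, Complex.conj_conj,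
      E.repr_apply_apply]
  simp only [← hFE]
  exact integral_comp_repr_eq hinv E F G

theorem integral_comp_inner (hinv : ∀ U : V ≃ₗᵢ[ℂ] V, σ.map U = σ)
    (E : OrthonormalBasis ι ℂ V) (p : ι) (w : V) (g : ℂ → ℂ) :
    ∫ Z, g ⟪w, Z⟫_ℂ ∂σ = ∫ Z, g (‖w‖ * E.repr Z p) ∂σ := by
  rcases eq_or_ne w 0 with rfl | hw
  · simp
  set w₀ : V := ((‖w‖⁻¹ : ℝ) : ℂ) • w
  have hw₀ : Orthonormal ℂ (({p} : Set ι).domRestrict fun _ => w₀) :=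
    ⟨fun _ => by simp [w₀, Set.domRestrict_apply, norm_smul, hw],
      fun i j hij => (hij (Subsingleton.elim i j)).elim⟩
  obtain ⟨F, hF⟩ := E.exists_eq_on hw₀
  have hFw : ∀ Z, ⟪w, Z⟫_ℂ = ‖w‖ * F.repr Z p := fun Z => by
    have hn : (‖w‖ : ℂ) ≠ 0 := by simpa using hw
    rw [F.repr_apply_apply, hF p rfl, inner_smul_left, Complex.conj_ofReal, ← mul_assoc,
      Complex.ofReal_inv, mul_inv_cancel₀ hn, one_mul]
  simp only [hFw]
  exact integral_comp_repr_eq hinv E F (fun x => g (‖w‖ * x p))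

theorem quarticMoment_eq_zero_of_phase (hinv : ∀ U : V ≃ₗᵢ[ℂ] V, σ.map U = σ)
    (E : OrthonormalBasis ι ℂ V) {a b c d : ι} {u : ι → ℂ} (hu : ∀ i, ‖u i‖ = 1)
    (h : u a * conj (u b) * u c * conj (u d) ≠ 1) : quarticMoment σ E a b c d = 0 := by
  have hphase := integral_comp_phase hinv E hu fun x => x a * conj (x b) * x c * conj (x d)
  have hfactor : ∀ x y z w : ℂ, u a * x * conj (u b * y) * (u c * z) * conj (u d * w) =
      u a * conj (u b) * u c * conj (u d) * (x * conj y * z * conj w) := fun x y z w => by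
    simp only [map_mul]; ring
  simp only [hfactor, integral_const_mul] at hphase
  exact (mul_left_eq_self₀.1 hphase).resolve_left h

theorem quarticMoment_eq_zero (hinv : ∀ U : V ≃ₗᵢ[ℂ] V, σ.map U = σ)
    (E : OrthonormalBasis ι ℂ V) {a b c d : ι} (h : ¬((a = b ∧ c = d) ∨ (a = d ∧ c = b))) :
    quarticMoment σ E a b c d = 0 := by
  classical
  -- The phase `I` on the coordinate `p` multiplies the moment by `I ^ m`, where `m` counts the
  -- occurrences of `p` in `(a, c)` minus those in `(b, d)`; unless the indices pair up, some
  -- `p` has `m ∈ {±1, ±2}`.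
  have key : ∀ p : ι, (if a = p then Complex.I else 1) * conj (if b = p then Complex.I else 1) *
      (if c = p then Complex.I else 1) * conj (if d = p then Complex.I else 1) ≠ 1 →
      quarticMoment σ E a b c d = 0 := fun p =>
    quarticMoment_eq_zero_of_phase hinv E (u := fun i => if i = p then Complex.I else 1)
      fun i => by split_ifs <;> simp
  by_cases hab : a = b
  · subst hab
    have hcd : c ≠ d := fun hcd => h (Or.inl ⟨rfl, hcd⟩)
    refine key d ?_
    simp only [hcd, if_true, if_false]
    split_ifs <;> norm_num [Complex.ext_iff]
  by_cases had : a = d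
  · subst had
    have hcb : c ≠ b := fun hcb => h (Or.inr ⟨rfl, hcb⟩)
    refine key b ?_
    simp [hab, hcb, Complex.ext_iff]
  · refine key a ?_
    simp only [Ne.symm hab, Ne.symm had, if_true, if_false]
    split_ifs <;> norm_num [Complex.ext_iff]

theorem integral_inner_mul_conj_inner_sq (hinv : ∀ U : V ≃ₗᵢ[ℂ] V, σ.map U = σ)
    (E : OrthonormalBasis ι ℂ V) (p : ι) (w : V) :
    ∫ Z, ⟪w, Z⟫_ℂ * conj ⟪w, Z⟫_ℂ * ⟪w, Z⟫_ℂ * conj ⟪w, Z⟫_ℂ ∂σ =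
      (‖w‖ : ℂ) ^ 4 * quarticMoment σ E p p p p := by
  rw [integral_comp_inner hinv E p w fun x => x * conj x * x * conj x, quarticMoment,
    ← integral_const_mul]
  congr 1 with Z
  simp only [map_mul, Complex.conj_ofReal]
  ring

theorem quarticMoment_self_eq (hinv : ∀ U : V ≃ₗᵢ[ℂ] V, σ.map U = σ)
    (E : OrthonormalBasis ι ℂ V) (p q : ι) :
    quarticMoment σ E q q q q = quarticMoment σ E p p p p := by
  have h := integral_inner_mul_conj_inner_sq hinv E p (E q)
  simp only [← E.repr_apply_apply, E.orthonormal.1 q, Complex.ofReal_one, one_pow,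
    one_mul] at h
  exact h

theorem two_mul_quarticMoment_of_ne [FiniteDimensional ℂ V] [IsFiniteMeasure σ]
    (hσ : ∀ᵐ Z ∂σ, Z ∈ Metric.sphere (0 : V) 1)
    (hinv : ∀ U : V ≃ₗᵢ[ℂ] V, σ.map U = σ) (E : OrthonormalBasis ι ℂ V) {p q : ι}
    (hpq : p ≠ q) : 2 * quarticMoment σ E p p q q = quarticMoment σ E p p p p := by
  set N : ℂ → ℂ := fun x => x * conj x * x * conj x
  have hline : ∀ t : ℂ, ‖t‖ = 1 →
      ∫ Z, N (E.repr Z p + t * E.repr Z q) ∂σ = 4 * quarticMoment σ E p p p p := by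
    intro t ht
    have hw : ‖E p + conj t • E q‖ * ‖E p + conj t • E q‖ = 2 := by
      rw [norm_add_sq_eq_norm_sq_add_norm_sq_of_inner_eq_zero (𝕜 := ℂ)]
      · simp [norm_smul, ht]
        norm_num
      · rw [inner_smul_right, E.inner_eq_zero hpq, mul_zero]
    have h := integral_inner_mul_conj_inner_sq hinv E p (E p + conj t • E q)
    simp only [inner_add_left, inner_smul_left, Complex.conj_conj, ← E.repr_apply_apply] at h
    have hw4 : (‖E p + conj t • E q‖ : ℂ) ^ 4 = 4 := by
      rw [show (‖E p + conj t • E q‖ : ℂ) ^ 4 =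
        ((‖E p + conj t • E q‖ * ‖E p + conj t • E q‖ : ℝ) : ℂ) ^ 2 by push_cast; ring, hw]
      norm_num
    rw [h, hw4]
  -- Averaging `|z_p + t z_q|⁴` over `t ∈ {±1, ±I}` keeps only the phase-invariant terms.
  have hpoint : ∀ x y : ℂ, N (x + 1 * y) + N (x + -1 * y) + N (x + Complex.I * y) +
      N (x + -Complex.I * y) = 4 * (N x + N y + 4 * (x * conj x * y * conj y)) := by
    intro x y
    simp only [N, map_add, map_mul, map_neg, map_one, Complex.conj_I]
    ring_nf
    simp only [Complex.I_sq, Complex.I_pow_four]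
    ring
  have hsum := integral_congr_ae (μ := σ) (ae_of_all _ fun Z => hpoint (E.repr Z p) (E.repr Z q))
  simp only at hsum
  rw [integral_add, integral_add, integral_add, integral_const_mul, integral_add, integral_add,
    integral_const_mul, hline 1 (by simp), hline (-1) (by simp), hline Complex.I (by simp),
    hline (-Complex.I) (by simp)] at hsum
  · have hp : ∫ Z, N (E.repr Z p) ∂σ = quarticMoment σ E p p p p := rfl
    have hq : ∫ Z, N (E.repr Z q) ∂σ = quarticMoment σ E p p p p :=
      quarticMoment_self_eq hinv E p q
    have hpq : ∫ Z, E.repr Z p * conj (E.repr Z p) * E.repr Z q * conj (E.repr Z q) ∂σ =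
      quarticMoment σ E p p q q := rfl
    rw [hp, hq, hpq] at hsum
    linear_combination (-1 / 8 : ℂ) * hsum
  all_goals exact integrable_of_ae_mem_sphere hσ (by fun_prop)

variable [FiniteDimensional ℂ V] [IsProbabilityMeasure σ]

theorem integral_repr_mul_conj_repr [DecidableEq ι] (hσ : ∀ᵐ Z ∂σ, Z ∈ Metric.sphere (0 : V) 1)
    (hinv : ∀ U : V ≃ₗᵢ[ℂ] V, σ.map U = σ) (E : OrthonormalBasis ι ℂ V) (a b : ι) :
    ∫ Z, E.repr Z a * conj (E.repr Z b) ∂σ = if a = b then (Fintype.card ι : ℂ)⁻¹ else 0 := by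
  split_ifs with hab
  · subst hab
    have hdiag : ∀ c, ∫ Z, E.repr Z c * conj (E.repr Z c) ∂σ =
        ∫ Z, E.repr Z a * conj (E.repr Z a) ∂σ := fun c => by
      simpa [← E.repr_apply_apply] using
        integral_comp_inner hinv E a (E c) fun x => x * conj x
    have hsum : ∑ c, ∫ Z, E.repr Z c * conj (E.repr Z c) ∂σ = 1 := by
      rw [← integral_finsetSum _ fun c _ => integrable_of_ae_mem_sphere hσ (by fun_prop)]
      rw [integral_congr_ae (g := fun _ => 1)]
      · simp
      filter_upwards [hσ] with Z hZ
      simp_all [E.sum_repr_mul_conj_repr]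
    simp only [hdiag, sum_const, card_univ, nsmul_eq_mul] at hsum
    exact eq_inv_of_mul_eq_one_right hsum
  · set u : ι → ℂ := fun i => if i = a then Complex.I else 1
    have hphase := integral_comp_phase hinv E (u := u)
      (fun i => by by_cases h : i = a <;> simp [u, h]) fun x => x a * conj (x b)
    simp only [u, if_pos rfl, if_neg (Ne.symm hab), one_mul, mul_assoc,
      integral_const_mul] at hphase
    exact (mul_left_eq_self₀.1 hphase).resolve_left (by simp [Complex.ext_iff])

theorem sum_quarticMoment (hσ : ∀ᵐ Z ∂σ, Z ∈ Metric.sphere (0 : V) 1)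
    (hinv : ∀ U : V ≃ₗᵢ[ℂ] V, σ.map U = σ) (E : OrthonormalBasis ι ℂ V) (a : ι) :
    ∑ c, quarticMoment σ E a a c c = (Fintype.card ι : ℂ)⁻¹ := by
  classical
  calc ∑ c, quarticMoment σ E a a c c
      = ∫ Z, ∑ c, E.repr Z a * conj (E.repr Z a) * E.repr Z c * conj (E.repr Z c) ∂σ :=
        (integral_finsetSum _ fun c _ => integrable_of_ae_mem_sphere hσ (by fun_prop)).symm
    _ = ∫ Z, E.repr Z a * conj (E.repr Z a) ∂σ := by
        refine integral_congr_ae ?_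
        filter_upwards [hσ] with Z hZ
        simp_rw [mul_assoc _ (E.repr Z _), ← mul_sum, E.sum_repr_mul_conj_repr]
        simp_all
    _ = (Fintype.card ι : ℂ)⁻¹ := by rw [integral_repr_mul_conj_repr hσ hinv E, if_pos rfl]

theorem quarticMoment_self (hσ : ∀ᵐ Z ∂σ, Z ∈ Metric.sphere (0 : V) 1)
    (hinv : ∀ U : V ≃ₗᵢ[ℂ] V, σ.map U = σ) (E : OrthonormalBasis ι ℂ V) (p : ι) :
    quarticMoment σ E p p p p = 2 / (Fintype.card ι * (Fintype.card ι + 1)) := by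
  classical
  have hcard : 1 ≤ Fintype.card ι := Fintype.card_pos_iff.2 ⟨p⟩
  have hoff : ∀ c ∈ univ.erase p, quarticMoment σ E p p c c = quarticMoment σ E p p p p / 2 :=
    fun c hc => by
      rw [← two_mul_quarticMoment_of_ne hσ hinv E (ne_of_mem_erase hc).symm]
      ring
  have hsum := sum_quarticMoment hσ hinv E p
  rw [← add_sum_erase _ _ (mem_univ p), sum_congr rfl hoff, sum_const,
    card_erase_of_mem (mem_univ p), card_univ, nsmul_eq_mul, Nat.cast_sub hcard] at hsum
  have hn : (Fintype.card ι : ℂ) ≠ 0 := by exact_mod_cast (by omega : Fintype.card ι ≠ 0)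
  have hn' : (Fintype.card ι : ℂ) + 1 ≠ 0 := Nat.cast_add_one_ne_zero _
  field_simp at hsum ⊢
  linear_combination hsum

theorem quarticMoment_of_ne (hσ : ∀ᵐ Z ∂σ, Z ∈ Metric.sphere (0 : V) 1)
    (hinv : ∀ U : V ≃ₗᵢ[ℂ] V, σ.map U = σ) (E : OrthonormalBasis ι ℂ V) {p q : ι}
    (hpq : p ≠ q) :
    quarticMoment σ E p p q q = 1 / (Fintype.card ι * (Fintype.card ι + 1)) := by
  have h := two_mul_quarticMoment_of_ne hσ hinv E hpq
  rw [quarticMoment_self hσ hinv E p] at h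
  linear_combination h / 2

theorem quarticMoment_eq [DecidableEq ι] (hσ : ∀ᵐ Z ∂σ, Z ∈ Metric.sphere (0 : V) 1)
    (hinv : ∀ U : V ≃ₗᵢ[ℂ] V, σ.map U = σ) (E : OrthonormalBasis ι ℂ V) (a b c d : ι) :
    quarticMoment σ E a b c d = ((if a = b ∧ c = d then 1 else 0) +
      (if a = d ∧ c = b then 1 else 0)) / (Fintype.card ι * (Fintype.card ι + 1)) := by
  by_cases h : (a = b ∧ c = d) ∨ (a = d ∧ c = b)
  · rcases eq_or_ne a c with rfl | hac
    · obtain ⟨rfl, rfl⟩ | ⟨rfl, rfl⟩ := h <;> norm_num [quarticMoment_self hσ hinv E]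
    · obtain ⟨rfl, rfl⟩ | ⟨rfl, rfl⟩ := h
      · simp [hac, quarticMoment_of_ne hσ hinv E hac]
      · simp [hac, quarticMoment_comm E a c c a, quarticMoment_of_ne hσ hinv E hac]
  · rw [quarticMoment_eq_zero hinv E h, if_neg fun h' => h (Or.inl h'),
      if_neg fun h' => h (Or.inr h'), add_zero, zero_div]

theorem integral_sesqForm_apply_self (hσ : ∀ᵐ Z ∂σ, Z ∈ Metric.sphere (0 : V) 1)
    (hinv : ∀ U : V ≃ₗᵢ[ℂ] V, σ.map U = σ) (E : OrthonormalBasis ι ℂ V)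
    (B : V →ₗ[ℂ] V →ₗ⋆[ℂ] ℂ) :
    ∫ Z, B Z Z ∂σ = (Fintype.card ι : ℂ)⁻¹ * ∑ a, B (E a) (E a) := by
  classical
  conv_lhs => enter [2, Z]; rw [B.apply_eq_sum_repr_mul_conj_repr E]
  rw [integral_finsetSum _ fun a _ => integrable_of_ae_mem_sphere hσ (by fun_prop), mul_sum]
  refine sum_congr rfl fun a _ => ?_
  rw [integral_finsetSum _ fun b _ => integrable_of_ae_mem_sphere hσ (by fun_prop)]
  simp [integral_mul_const, integral_repr_mul_conj_repr hσ hinv E]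

theorem IsKahlerCurvatureTensor.integral_apply_self {R : V → V → V → V → ℂ}
    (hR : IsKahlerCurvatureTensor R)
    (hσ : ∀ᵐ Z ∂σ, Z ∈ Metric.sphere (0 : V) 1) (hinv : ∀ U : V ≃ₗᵢ[ℂ] V, σ.map U = σ)
    (E : OrthonormalBasis ι ℂ V) :
    ∫ Z, R Z Z Z Z ∂σ = 2 / (Fintype.card ι * (Fintype.card ι + 1)) *
      ∑ a, ∑ c, R (E a) (E a) (E c) (E c) := by
  classical
  have hint : ∀ f : V → ℂ, Continuous f → Integrable f σ :=
    fun f hf => integrable_of_ae_mem_sphere hσ hf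
  calc ∫ Z, R Z Z Z Z ∂σ
      = ∑ a, ∑ b, ∑ c, ∑ d, quarticMoment σ E a b c d * R (E a) (E b) (E c) (E d) := by
        conv_lhs => enter [2, Z]; rw [hR.apply_eq_sum E]
        rw [integral_finsetSum _ fun a _ => hint _ (by fun_prop)]
        refine sum_congr rfl fun a _ => ?_
        rw [integral_finsetSum _ fun b _ => hint _ (by fun_prop)]
        refine sum_congr rfl fun b _ => ?_
        rw [integral_finsetSum _ fun c _ => hint _ (by fun_prop)]
        refine sum_congr rfl fun c _ => ?_
        rw [integral_finsetSum _ fun d _ => hint _ (by fun_prop)]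
        exact sum_congr rfl fun d _ => integral_mul_const _ _
    _ = _ := by
        simp only [quarticMoment_eq hσ hinv E, add_div, add_mul, sum_add_distrib, ite_and,
          ite_div, ite_mul, zero_div, zero_mul, sum_ite_eq, sum_ite_eq', sum_ite_irrel,
          sum_const_zero, mem_univ, if_true]
        have hcross :
            ∑ a, ∑ c, R (E a) (E c) (E c) (E a) = ∑ a, ∑ c, R (E a) (E a) (E c) (E c) := by
          rw [sum_comm]
          exact sum_congr rfl fun c _ => sum_congr rfl fun a _ => hR.symm₁₃ _ _ _ _
        simp only [← mul_sum, hcross]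
        ring

end UnitarilyInvariant

end

/-- **Sphere average of `Ric_k^⊥`.** Let `V` be a `k`-dimensional complex inner
product space (`k ≥ 1`) with orthonormal basis `E`, let `R` be a Kähler
curvature-type tensor on `V`, let `S_k = Σ_{i,j} R(E_i,Ē_i,E_j,Ē_j)`, and let `σ`
be the rotation-invariant probability measure on the unit sphere of `V`. Then
`∫ [Σ_j R(Z,Z̄,E_j,Ē_j) − R(Z,Z̄,Z,Z̄)] dσ(Z) = ((k−1)/(k(k+1))) · S_k`. -/
theorem average_Ric_k_perp
    {V : Type*} [NormedAddCommGroup V] [InnerProductSpace ℂ V]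
    [MeasurableSpace V] [BorelSpace V]
    (k : ℕ) (hk : 1 ≤ k) (E : OrthonormalBasis (Fin k) ℂ V)
    (R : V → V → V → V → ℂ) (hR : IsKahlerCurvatureTensor R)
    (σ : Measure V) [IsProbabilityMeasure σ]
    (hsupp : σ (Metric.sphere (0 : V) 1)ᶜ = 0)
    (hinv : ∀ f : V ≃ₗᵢ[ℂ] V, Measure.map f σ = σ) :
    ∫ Z, ((∑ j : Fin k, R Z Z (E j) (E j)) - R Z Z Z Z) ∂σ =
      (((k : ℂ) - 1) / (k * (k + 1))) * ∑ i : Fin k, ∑ j : Fin k,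
        R (E i) (E i) (E j) (E j) := by
  have := E.toBasis.finiteDimensional_of_finite
  have hσ : ∀ᵐ Z ∂σ, Z ∈ Metric.sphere (0 : V) 1 := mem_ae_iff.2 hsupp
  have hRic := integral_sesqForm_apply_self hσ hinv E (∑ j, hR.sesqForm₁₂ (E j) (E j))
  simp only [LinearMap.sum_apply, IsKahlerCurvatureTensor.sesqForm₁₂_apply] at hRic
  have hRic_int : Integrable (fun Z => ∑ j, R Z Z (E j) (E j)) σ :=
    integrable_of_ae_mem_sphere hσ <| continuous_finsetSum _ fun j _ =>
      hR.continuous_comp continuous_id continuous_id continuous_const continuous_const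
  have hR_int : Integrable (fun Z => R Z Z Z Z) σ := integrable_of_ae_mem_sphere hσ <|
    hR.continuous_comp continuous_id continuous_id continuous_id continuous_id
  rw [integral_sub hRic_int hR_int, hRic, hR.integral_apply_self hσ hinv E, Fintype.card_fin]
  have hk0 : (k : ℂ) ≠ 0 := by exact_mod_cast (by omega : k ≠ 0)
  have hk1 : (k : ℂ) + 1 ≠ 0 := Nat.cast_add_one_ne_zero k
  field_simp
  ring
end

section
/- Let V be a complex inner product space of dimension n ≥ 3, let R be a Kähler curvature-type tensor on V, and let φ ∈ ℝ. Assume that for every complex 3-dimensional subspace Σ ⊆ V, every orthonormal basis (E_1,E_2,E_3) of Σ, and every unit vector v ∈ Σ one has Σ_{j=1}^3 R(v,v̄,E_j,Ē_j) − R(v,v̄,v,v̄) ≥ φ (this quantity is real). Then for every orthonormal triple (e_1,e_2,e_l) in V, the real number R_{1 1̄ 1 1̄} + R_{2 2̄ 2 2̄} − R_{1 2̄ 1 2̄} − R_{2 1̄ 2 1̄} + 2(R_{1 1̄ l l̄} + R_{2 2̄ l l̄} + R_{1 2̄ l l̄} + R_{2 1̄ l l̄}) is at least 4φ, where R_{i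 j̄ k l̄} denotes R evaluated on the corresponding vectors of the triple. -/
open MeasureTheory

/-!
Rotating the orthonormal pair `(e₀, e₁)` by 45° gives the orthonormal triple
`(v, u, e₂)` with `v = (e₀ + e₁)/√2`, `u = (e₀ − e₁)/√2`. For this frame and the unit
vector `v`, the hypothesis reads `φ ≤ Re (R_{vv̄uū} + R_{vv̄22̄})`, and expanding by
sesquilinearity and the Kähler symmetries turns `4 (R_{vv̄uū} + R_{vv̄22̄})` into the
combination of the theorem.
-/

namespace IsKahlerCurvatureTensor

variable {V : Type*} [AddCommGroup V] [Module ℂ V] {R : V → V → V → V → ℂ}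

theorem map_sub₃ (hR : IsKahlerCurvatureTensor R) (x y z z' w : V) :
    R x y (z - z') w = R x y z w - R x y z' w := by
  rw [sub_eq_add_neg, ← neg_one_smul ℂ z', hR.map_add₃, hR.map_smul₃]; ring

theorem map_sub₄ (hR : IsKahlerCurvatureTensor R) (x y z w w' : V) :
    R x y z (w - w') = R x y z w - R x y z w' := by
  rw [sub_eq_add_neg, ← neg_one_smul ℂ w', hR.map_add₄, hR.map_smul₄, map_neg, map_one]
  ring

theorem map_ofReal_smul₁₂ (hR : IsKahlerCurvatureTensor R) (c : ℝ) (x y z w : V) :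
    R ((c : ℂ) • x) ((c : ℂ) • y) z w = (c : ℂ) ^ 2 * R x y z w := by
  rw [hR.map_smul₁, hR.map_smul₂, Complex.conj_ofReal]; ring

theorem map_ofReal_smul₃₄ (hR : IsKahlerCurvatureTensor R) (c : ℝ) (x y z w : V) :
    R x y ((c : ℂ) • z) ((c : ℂ) • w) = (c : ℂ) ^ 2 * R x y z w := by
  rw [hR.map_smul₃, hR.map_smul₄, Complex.conj_ofReal]; ring

theorem map_add_add (hR : IsKahlerCurvatureTensor R) (x y z w : V) :
    R (x + y) (x + y) z w = R x x z w + R x y z w + R y x z w + R y y z w := by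
  simp only [hR.map_add₁, hR.map_add₂]; ring

theorem map_add_add_sub_sub (hR : IsKahlerCurvatureTensor R) (x y : V) :
    R (x + y) (x + y) (x - y) (x - y) =
      R x x x x + R y y y y - R x y x y - R y x y x := by
  simp only [hR.map_add₁, hR.map_add₂, hR.map_sub₃, hR.map_sub₄]
  linear_combination hR.symm₂₄ x y x x + hR.symm₁₃ y x x x + hR.symm₁₃ y y x x
    + hR.symm₁₃ x x y y + hR.symm₁₃ x y y y + hR.symm₂₄ y x y y

end IsKahlerCurvatureTensor

theorem Orthonormal.rotate_pair {V : Type*} [NormedAddCommGroup V] [InnerProductSpace ℂ V]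
    {e : Fin 3 → V} (he : Orthonormal ℂ e) {c : ℝ} (hc : c ^ 2 = 1 / 2) :
    Orthonormal ℂ ![(c : ℂ) • (e 0 + e 1), (c : ℂ) • (e 0 - e 1), e 2] := by
  have hee := orthonormal_iff_ite.mp he
  have hcℂ : (c : ℂ) * c = 1 / 2 := by
    rw [← Complex.ofReal_mul, ← sq, hc]; norm_num
  rw [orthonormal_iff_ite]
  intro i j
  fin_cases i <;> fin_cases j <;>
    simp [inner_smul_left, inner_smul_right, inner_add_left, inner_add_right,
      inner_sub_left, inner_sub_right, hee, Complex.conj_ofReal,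
      -Complex.coe_smul, -inner_self_eq_norm_sq_to_K] <;>
    linear_combination 2 * hcℂ

section RicPerp

variable {V : Type*} [NormedAddCommGroup V] [InnerProductSpace ℂ V]

/-- `Ric₃^⊥ ≥ φ` in the paper's notation. -/
def RicPerpThreeGE (R : V → V → V → V → ℂ) (φ : ℝ) : Prop :=
  ∀ K : Submodule ℂ V, Module.finrank ℂ K = 3 →
    ∀ E : Fin 3 → V, Orthonormal ℂ E → (∀ j, E j ∈ K) →
    ∀ v ∈ K, ‖v‖ = 1 → φ ≤ ((∑ j : Fin 3, R v v (E j) (E j)) - R v v v v).re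

theorem RicPerpThreeGE.le_re_of_orthonormal {R : V → V → V → V → ℂ} {φ : ℝ}
    (h : RicPerpThreeGE R φ) {E : Fin 3 → V} (hE : Orthonormal ℂ E) :
    φ ≤ (R (E 0) (E 0) (E 1) (E 1) + R (E 0) (E 0) (E 2) (E 2)).re := by
  have hmem : ∀ j, E j ∈ Submodule.span ℂ (Set.range E) :=
    fun j => Submodule.subset_span ⟨j, rfl⟩
  have hdim : Module.finrank ℂ (Submodule.span ℂ (Set.range E)) = 3 := by
    rw [finrank_span_eq_card hE.linearIndependent, Fintype.card_fin]
  have := h _ hdim E hE hmem (E 0) (hmem 0) (hE.1 0)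
  rwa [Fin.sum_univ_three, add_assoc, add_sub_cancel_left] at this

end RicPerp

theorem Ric1_inequality_general
    {V : Type*} [NormedAddCommGroup V] [InnerProductSpace ℂ V]
    (R : V → V → V → V → ℂ) (hR : IsKahlerCurvatureTensor R) (φ : ℝ)
    (hRic : ∀ K : Submodule ℂ V, Module.finrank ℂ K = 3 →
      ∀ E : Fin 3 → V, Orthonormal ℂ E → (∀ j, E j ∈ K) →
      ∀ v ∈ K, ‖v‖ = 1 →
        φ ≤ ((∑ j : Fin 3, R v v (E j) (E j)) - R v v v v).re)
    (e : Fin 3 → V) (he : Orthonormal ℂ e) :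
    4 * φ ≤ (R (e 0) (e 0) (e 0) (e 0) + R (e 1) (e 1) (e 1) (e 1)
      - R (e 0) (e 1) (e 0) (e 1) - R (e 1) (e 0) (e 1) (e 0)
      + 2 * (R (e 0) (e 0) (e 2) (e 2) + R (e 1) (e 1) (e 2) (e 2)
        + R (e 0) (e 1) (e 2) (e 2) + R (e 1) (e 0) (e 2) (e 2))).re := by
  have hc : (√2)⁻¹ ^ 2 = (1 / 2 : ℝ) := by
    rw [inv_pow, Real.sq_sqrt zero_le_two, one_div]
  have hframe := (show RicPerpThreeGE R φ from hRic).le_re_of_orthonormal (he.rotate_pair hc)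
  simp only [Matrix.cons_val_zero, Matrix.cons_val_one, Matrix.cons_val_two,
    Matrix.head_cons, Matrix.tail_cons, hR.map_ofReal_smul₁₂, hR.map_ofReal_smul₃₄,
    hR.map_add_add_sub_sub, hR.map_add_add, ← Complex.ofReal_pow, hc] at hframe
  simp only [Complex.add_re, Complex.sub_re, Complex.re_ofReal_mul] at hframe
  simp only [Complex.add_re, Complex.sub_re, Complex.mul_re, Complex.re_ofNat, Complex.im_ofNat,
    zero_mul, sub_zero]
  linarith

/-- **Inequality (eq:Ric1) in the proof of Theorem 1.** Let `V` be a complex inner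
product space of dimension `n ≥ 3`, `R` a Kähler curvature-type tensor and `φ ∈ ℝ`.
If `Ric_3^⊥ ≥ φ` pointwise (for every 3-dimensional subspace, orthonormal basis of
it and unit vector in it), then for every orthonormal triple `(e₁, e₂, e_l)`,
`R_{11̄11̄} + R_{22̄22̄} − R_{12̄12̄} − R_{21̄21̄}
  + 2(R_{11̄ll̄} + R_{22̄ll̄} + R_{12̄ll̄} + R_{21̄ll̄}) ≥ 4φ`. -/
theorem Ric1_inequality
    {V : Type*} [NormedAddCommGroup V] [InnerProductSpace ℂ V] [FiniteDimensional ℂ V]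
    (hn : 3 ≤ Module.finrank ℂ V)
    (R : V → V → V → V → ℂ) (hR : IsKahlerCurvatureTensor R) (φ : ℝ)
    (hRic : ∀ K : Submodule ℂ V, Module.finrank ℂ K = 3 →
      ∀ E : Fin 3 → V, Orthonormal ℂ E → (∀ j, E j ∈ K) →
      ∀ v ∈ K, ‖v‖ = 1 →
        φ ≤ ((∑ j : Fin 3, R v v (E j) (E j)) - R v v v v).re)
    (e : Fin 3 → V) (he : Orthonormal ℂ e) :
    4 * φ ≤ (R (e 0) (e 0) (e 0) (e 0) + R (e 1) (e 1) (e 1) (e 1)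
      - R (e 0) (e 1) (e 0) (e 1) - R (e 1) (e 0) (e 1) (e 0)
      + 2 * (R (e 0) (e 0) (e 2) (e 2) + R (e 1) (e 1) (e 2) (e 2)
        + R (e 0) (e 1) (e 2) (e 2) + R (e 1) (e 0) (e 2) (e 2))).re :=
  Ric1_inequality_general R hR φ hRic e he
end

section
/- Let V be a complex inner product space of dimension n ≥ 3, let R be a Kähler curvature-type tensor on V, and let φ ∈ ℝ. Assume that for every complex 3-dimensional subspace Σ ⊆ V, every orthonormal basis (E_1,E_2,E_3) of Σ, and every unit vector v ∈ Σ one has Σ_{j=1}^3 R(v,v̄,E_j,Ē_j) − R(v,v̄,v,v̄) ≥ φ. Then for every orthonormal triple (e_1,e_2,e_l) in V, the real number R_{1 1̄ 1 1̄} + R_{2 2̄ 2 2̄} + R_{1 2̄ 1 2̄} + R_{2 1̄ 2 1̄} + 2(R_{1 1̄ l l̄} + R_{2 2̄ l l̄}) is at least 4φ. -/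
open MeasureTheory

/-!
Apply the hypothesis in `span {e₀, e₁, e₂}`, with the frame `e` itself, to the two unit vectors
`(e₀ ± i e₁)/√2`. Expanding by sesquilinearity, the terms of odd degree in `e₁` cancel in the sum
of the two values, and the Kähler symmetries identify the remaining mixed terms; the sum is exactly
half the left-hand side of the claim.
-/

open Complex

namespace IsKahlerCurvatureTensor

variable {V : Type*} [AddCommGroup V] [Module ℂ V] {R : V → V → V → V → ℂ}

theorem apply_swap_pairs (hR : IsKahlerCurvatureTensor R) (x y : V) :
    R y y x x = R x x y y := by
  rw [hR.symm₁₃, hR.symm₂₄]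

theorem apply_smul_smul (hR : IsKahlerCurvatureTensor R) (c : ℂ) (x z w : V) :
    R (c • x) (c • x) z w = normSq c * R x x z w := by
  rw [hR.map_smul₁, hR.map_smul₂, ← mul_assoc, mul_conj]

theorem apply_smul_self (hR : IsKahlerCurvatureTensor R) (c : ℂ) (x : V) :
    R (c • x) (c • x) (c • x) (c • x) = normSq c ^ 2 * R x x x x := by
  rw [hR.map_smul₃, hR.map_smul₄, apply_smul_smul hR, ← mul_conj]
  ring

theorem apply_add_I_smul_add_apply_add_neg_I_smul (hR : IsKahlerCurvatureTensor R)
    (x y w : V) :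
    R (x + I • y) (x + I • y) w w + R (x + (-I) • y) (x + (-I) • y) w w
      = 2 * (R x x w w + R y y w w) := by
  simp only [hR.map_add₁, hR.map_add₂, hR.map_smul₁, hR.map_smul₂, conj_I, map_neg, neg_neg]
  ring_nf
  rw [I_sq]
  ring

theorem apply_add_I_smul_self_add_apply_add_neg_I_smul_self (hR : IsKahlerCurvatureTensor R)
    (x y : V) :
    R (x + I • y) (x + I • y) (x + I • y) (x + I • y)
        + R (x + (-I) • y) (x + (-I) • y) (x + (-I) • y) (x + (-I) • y)
      = 2 * (R x x x x + R y y y y + 4 * R x x y y - R x y x y - R y x y x) := by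
  have hyx : R y x x y = R x x y y := (hR.symm₂₄ _ _ _ _).trans (hR.apply_swap_pairs x y)
  simp only [hR.map_add₁, hR.map_add₂, hR.map_add₃, hR.map_add₄, hR.map_smul₁, hR.map_smul₂,
    hR.map_smul₃, hR.map_smul₄, conj_I, map_neg, neg_neg]
  rw [hR.apply_swap_pairs x y, hR.symm₂₄ x y y x, hyx]
  ring_nf
  rw [I_sq, I_pow_four]
  ring

end IsKahlerCurvatureTensor

/-- The paper's `Ric₃^⊥(v)`, computed in the frame `E`. -/
def ric3Perp {V : Type*} (R : V → V → V → V → ℂ) (E : Fin 3 → V) (v : V) : ℂ :=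
  (∑ j, R v v (E j) (E j)) - R v v v v

section ric3Perp

variable {V : Type*} [AddCommGroup V] [Module ℂ V] {R : V → V → V → V → ℂ}

theorem ric3Perp_smul (hR : IsKahlerCurvatureTensor R) (E : Fin 3 → V) (c : ℂ) (v : V) :
    ric3Perp R E (c • v)
      = normSq c * (∑ j, R v v (E j) (E j)) - normSq c ^ 2 * R v v v v := by
  rw [ric3Perp, hR.apply_smul_self]
  simp only [hR.apply_smul_smul, Finset.mul_sum]

theorem ric3Perp_add_I_smul_add_ric3Perp_add_neg_I_smul (hR : IsKahlerCurvatureTensor R)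
    (e : Fin 3 → V) (c : ℂ) (hc : normSq c = 1 / 2) :
    2 * (ric3Perp R e (c • (e 0 + I • e 1)) + ric3Perp R e (c • (e 0 + (-I) • e 1)))
      = R (e 0) (e 0) (e 0) (e 0) + R (e 1) (e 1) (e 1) (e 1)
        + R (e 0) (e 1) (e 0) (e 1) + R (e 1) (e 0) (e 1) (e 0)
        + 2 * (R (e 0) (e 0) (e 2) (e 2) + R (e 1) (e 1) (e 2) (e 2)) := by
  have hquartic := hR.apply_add_I_smul_self_add_apply_add_neg_I_smul_self (e 0) (e 1)
  have hdiag := hR.apply_add_I_smul_add_apply_add_neg_I_smul (e 0) (e 1)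
  simp only [ric3Perp_smul hR, hc, Fin.sum_univ_three]
  push_cast
  linear_combination hdiag (e 0) + hdiag (e 1) + hdiag (e 2) - (1 / 2 : ℂ) * hquartic
    + 2 * hR.apply_swap_pairs (e 0) (e 1)

end ric3Perp

theorem norm_inv_sqrt_two_smul_add_smul {V : Type*} [NormedAddCommGroup V]
    [InnerProductSpace ℂ V] {x y : V} (hx : ‖x‖ = 1) (hy : ‖y‖ = 1) (hxy : inner ℂ x y = 0)
    {t : ℂ} (ht : ‖t‖ = 1) :
    ‖((√2 : ℝ) : ℂ)⁻¹ • (x + t • y)‖ = 1 := by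
  have hxty : inner ℂ x (t • y) = 0 := by rw [inner_smul_right, hxy, mul_zero]
  have hnorm : ‖x + t • y‖ = √2 := by
    rw [← Real.sqrt_mul_self (norm_nonneg _),
      norm_add_sq_eq_norm_sq_add_norm_sq_of_inner_eq_zero _ _ hxty, norm_smul, ht, hx, hy]
    norm_num
  rw [norm_smul, hnorm, norm_inv, norm_real, Real.norm_of_nonneg (Real.sqrt_nonneg _),
    inv_mul_cancel₀ (by positivity)]

theorem normSq_inv_sqrt_two : normSq ((√2 : ℝ) : ℂ)⁻¹ = 1 / 2 := by
  rw [normSq_inv, normSq_ofReal, Real.mul_self_sqrt zero_le_two, one_div]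

theorem Ric4_inequality_general
    {V : Type*} [NormedAddCommGroup V] [InnerProductSpace ℂ V]
    (R : V → V → V → V → ℂ) (hR : IsKahlerCurvatureTensor R) (φ : ℝ)
    (hRic : ∀ K : Submodule ℂ V, Module.finrank ℂ K = 3 →
      ∀ E : Fin 3 → V, Orthonormal ℂ E → (∀ j, E j ∈ K) →
      ∀ v ∈ K, ‖v‖ = 1 →
        φ ≤ ((∑ j : Fin 3, R v v (E j) (E j)) - R v v v v).re)
    (e : Fin 3 → V) (he : Orthonormal ℂ e) :
    4 * φ ≤ (R (e 0) (e 0) (e 0) (e 0) + R (e 1) (e 1) (e 1) (e 1)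
      + R (e 0) (e 1) (e 0) (e 1) + R (e 1) (e 0) (e 1) (e 0)
      + 2 * (R (e 0) (e 0) (e 2) (e 2) + R (e 1) (e 1) (e 2) (e 2))).re := by
  set K := Submodule.span ℂ (Set.range e)
  have hK : Module.finrank ℂ K = 3 := by
    rw [finrank_span_eq_card he.linearIndependent, Fintype.card_fin]
  have he_mem : ∀ j, e j ∈ K := fun j => Submodule.subset_span ⟨j, rfl⟩
  have hφ : ∀ t : ℂ, ‖t‖ = 1 → φ ≤ (ric3Perp R e (((√2 : ℝ) : ℂ)⁻¹ • (e 0 + t • e 1))).re :=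
    fun t ht => hRic K hK e he he_mem _
      (K.smul_mem _ (K.add_mem (he_mem 0) (K.smul_mem _ (he_mem 1))))
      (norm_inv_sqrt_two_smul_add_smul (he.1 0) (he.1 1) (he.2 (by decide)) ht)
  rw [← ric3Perp_add_I_smul_add_ric3Perp_add_neg_I_smul hR e _ normSq_inv_sqrt_two]
  simp only [mul_re, add_re, re_ofNat, im_ofNat, zero_mul, sub_zero]
  linarith [hφ I (by simp), hφ (-I) (by simp)]

/-- **Inequality (eq:Ric4) in the proof of Theorem 1.** Let `V` be a complex inner
product space of dimension `n ≥ 3`, `R` a Kähler curvature-type tensor and `φ ∈ ℝ`.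
If `Ric_3^⊥ ≥ φ` pointwise, then for every orthonormal triple `(e₁, e₂, e_l)`,
`R_{11̄11̄} + R_{22̄22̄} + R_{12̄12̄} + R_{21̄21̄} + 2(R_{11̄ll̄} + R_{22̄ll̄}) ≥ 4φ`. -/
theorem Ric4_inequality
    {V : Type*} [NormedAddCommGroup V] [InnerProductSpace ℂ V] [FiniteDimensional ℂ V]
    (hn : 3 ≤ Module.finrank ℂ V)
    (R : V → V → V → V → ℂ) (hR : IsKahlerCurvatureTensor R) (φ : ℝ)
    (hRic : ∀ K : Submodule ℂ V, Module.finrank ℂ K = 3 →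
      ∀ E : Fin 3 → V, Orthonormal ℂ E → (∀ j, E j ∈ K) →
      ∀ v ∈ K, ‖v‖ = 1 →
        φ ≤ ((∑ j : Fin 3, R v v (E j) (E j)) - R v v v v).re)
    (e : Fin 3 → V) (he : Orthonormal ℂ e) :
    4 * φ ≤ (R (e 0) (e 0) (e 0) (e 0) + R (e 1) (e 1) (e 1) (e 1)
      + R (e 0) (e 1) (e 0) (e 1) + R (e 1) (e 0) (e 1) (e 0)
      + 2 * (R (e 0) (e 0) (e 2) (e 2) + R (e 1) (e 1) (e 2) (e 2))).re :=
  Ric4_inequality_general R hR φ hRic e he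
end

section
/- Let V be a complex inner product space of dimension n ≥ 3, let R be a Kähler curvature-type tensor on V, and let φ ∈ ℝ. Assume that for every complex 3-dimensional subspace Σ ⊆ V, every orthonormal basis (E_1,E_2,E_3) of Σ, and every unit vector v ∈ Σ one has Σ_{j=1}^3 R(v,v̄,E_j,Ē_j) − R(v,v̄,v,v̄) ≥ φ. Then for every orthonormal triple (e_1,e_2,e_l) in V, the real number R_{1 1̄ 1 1̄} + R_{2 2̄ 2 2̄} + 2(R_{1 1̄ l l̄} + R_{2 2̄ l l̄}) is at least 4φ. -/
open Complex

theorem Orthonormal.norm_smul_add_smul_sq {𝕜 E ι : Type*} [RCLike 𝕜] [NormedAddCommGroup E]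
    [InnerProductSpace 𝕜 E] {e : ι → E} (he : Orthonormal 𝕜 e) {i j : ι} (hij : i ≠ j)
    (a b : 𝕜) : ‖a • e i + b • e j‖ ^ 2 = ‖a‖ ^ 2 + ‖b‖ ^ 2 := by
  have h : inner 𝕜 (a • e i) (b • e j) = 0 := by
    rw [inner_smul_left, inner_smul_right, he.2 hij, mul_zero, mul_zero]
  simp only [sq, norm_add_sq_eq_norm_sq_add_norm_sq_of_inner_eq_zero _ _ h, norm_smul, he.1,
    mul_one]

/-- The paper's `Ric₃^⊥(v)` when `E` is an orthonormal frame of a complex 3-plane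
containing `v`. -/
def perpRicci {V ι : Type*} [Fintype ι] (R : V → V → V → V → ℂ) (E : ι → V) (v : V) : ℂ :=
  (∑ j, R v v (E j) (E j)) - R v v v v

namespace IsKahlerCurvatureTensor

variable {V : Type*} [AddCommGroup V] [Module ℂ V] {R : V → V → V → V → ℂ}
  (hR : IsKahlerCurvatureTensor R)
include hR

theorem map_smul_smul₁₂ (a : ℂ) (x z w : V) :
    R (a • x) (a • x) z w = normSq a * R x x z w := by
  rw [hR.map_smul₁, hR.map_smul₂, ← mul_assoc, mul_conj]

theorem map_smul_smul₃₄ (a : ℂ) (x y z : V) :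
    R x y (a • z) (a • z) = normSq a * R x y z z := by
  rw [hR.map_smul₃, hR.map_smul₄, ← mul_assoc, mul_conj]

theorem sum_fourthRoots_map_add_smul₁₂ (x y z w : V) :
    ∑ k : Fin 4, R (x + ![1, I, -1, -I] k • y) (x + ![1, I, -1, -I] k • y) z w
      = 4 * (R x x z w + R y y z w) := by
  simp only [Fin.sum_univ_four, hR.map_add₁, hR.map_add₂, hR.map_smul₁, hR.map_smul₂,
    Fin.isValue, Matrix.cons_val, map_one, map_neg, conj_I]
  linear_combination (-2 * R y y z w) * I_mul_I

theorem sum_fourthRoots_map_add_smul (x y : V) :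
    ∑ k : Fin 4, R (x + ![1, I, -1, -I] k • y) (x + ![1, I, -1, -I] k • y)
        (x + ![1, I, -1, -I] k • y) (x + ![1, I, -1, -I] k • y)
      = 4 * (R x x x x + R y y y y + 4 * R x x y y) := by
  have h₁ : R y y x x = R x x y y := (hR.symm₁₃ _ _ _ _).trans (hR.symm₂₄ _ _ _ _)
  have h₂ : R y x x y = R x x y y := hR.symm₁₃ _ _ _ _
  have h₃ : R x y y x = R x x y y := hR.symm₂₄ _ _ _ _
  simp only [Fin.sum_univ_four, hR.map_add₁, hR.map_add₂, hR.map_add₃, hR.map_add₄,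
    hR.map_smul₁, hR.map_smul₂, hR.map_smul₃, hR.map_smul₄, h₁, h₂, h₃,
    Fin.isValue, Matrix.cons_val, map_one, map_neg, conj_I]
  linear_combination (-8 * R x x y y + 2 * R x y x y + 2 * R y x y x
    + 2 * (I * I - 1) * R y y y y) * I_mul_I

theorem sum_fourthRoots_perpRicci {ι : Type*} [Fintype ι] (E : ι → V) (x y : V) :
    ∑ k : Fin 4, perpRicci R E (x + ![1, I, -1, -I] k • y)
      = 4 * ∑ j, (R x x (E j) (E j) + R y y (E j) (E j))
        - 4 * (R x x x x + R y y y y + 4 * R x x y y) := by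
  simp only [perpRicci, Finset.sum_sub_distrib, hR.sum_fourthRoots_map_add_smul]
  rw [Finset.sum_comm, Finset.mul_sum]
  simp only [hR.sum_fourthRoots_map_add_smul₁₂]

theorem sum_fourthRoots_perpRicci_smul {c : ℂ} (hc : normSq c = 2⁻¹) (E : Fin 3 → V) :
    ∑ k : Fin 4, perpRicci R E (c • E 0 + ![1, I, -1, -I] k • c • E 1)
      = R (E 0) (E 0) (E 0) (E 0) + R (E 1) (E 1) (E 1) (E 1)
        + 2 * (R (E 0) (E 0) (E 2) (E 2) + R (E 1) (E 1) (E 2) (E 2)) := by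
  have h : R (E 1) (E 1) (E 0) (E 0) = R (E 0) (E 0) (E 1) (E 1) :=
    (hR.symm₁₃ _ _ _ _).trans (hR.symm₂₄ _ _ _ _)
  simp only [hR.sum_fourthRoots_perpRicci, hR.map_smul_smul₁₂, hR.map_smul_smul₃₄,
    Fin.sum_univ_three, h, hc]
  push_cast
  ring

end IsKahlerCurvatureTensor

theorem Ric34_averaged_inequality_general
    {V : Type*} [NormedAddCommGroup V] [InnerProductSpace ℂ V]
    (R : V → V → V → V → ℂ) (hR : IsKahlerCurvatureTensor R) (φ : ℝ)
    (hRic : ∀ K : Submodule ℂ V, Module.finrank ℂ K = 3 →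
      ∀ E : Fin 3 → V, Orthonormal ℂ E → (∀ j, E j ∈ K) →
      ∀ v ∈ K, ‖v‖ = 1 →
        φ ≤ ((∑ j : Fin 3, R v v (E j) (E j)) - R v v v v).re)
    (e : Fin 3 → V) (he : Orthonormal ℂ e) :
    4 * φ ≤ (R (e 0) (e 0) (e 0) (e 0) + R (e 1) (e 1) (e 1) (e 1)
      + 2 * (R (e 0) (e 0) (e 2) (e 2) + R (e 1) (e 1) (e 2) (e 2))).re := by
  set c : ℂ := (((√2)⁻¹ : ℝ) : ℂ)
  have hc : normSq c = 2⁻¹ := by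
    rw [normSq_ofReal, ← mul_inv, Real.mul_self_sqrt zero_le_two]
  set K := Submodule.span ℂ (Set.range e)
  have heK (j : Fin 3) : e j ∈ K := Submodule.subset_span ⟨j, rfl⟩
  have hK : Module.finrank ℂ K = 3 := by
    rw [finrank_span_eq_card he.linearIndependent, Fintype.card_fin]
  have hunit (k : Fin 4) : ‖c • e 0 + ![1, I, -1, -I] k • c • e 1‖ = 1 := by
    have hζ : ‖![1, I, -1, -I] k‖ = 1 := by fin_cases k <;> simp
    rw [← pow_eq_one_iff_of_nonneg (norm_nonneg _) two_ne_zero, smul_smul,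
      he.norm_smul_add_smul_sq (by decide), norm_mul, hζ, one_mul, ← normSq_eq_norm_sq, hc]
    norm_num
  have hbound (k : Fin 4) : φ ≤ (perpRicci R e (c • e 0 + ![1, I, -1, -I] k • c • e 1)).re :=
    hRic K hK e he heK _ (K.add_mem (K.smul_mem _ (heK 0)) (K.smul_mem _ (K.smul_mem _ (heK 1))))
      (hunit k)
  rw [← hR.sum_fourthRoots_perpRicci_smul hc, re_sum]
  simpa using Finset.sum_le_sum (s := Finset.univ) fun k _ => hbound k

/-- **The averaged inequality of (eq:Ric3) and (eq:Ric4) in the proof of Theorem 1.**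
Let `V` be a complex inner product space of dimension `n ≥ 3`, `R` a Kähler
curvature-type tensor and `φ ∈ ℝ`. If `Ric_3^⊥ ≥ φ` pointwise, then for every
orthonormal triple `(e₁, e₂, e_l)`,
`R_{11̄11̄} + R_{22̄22̄} + 2(R_{11̄ll̄} + R_{22̄ll̄}) ≥ 4φ`. -/
theorem Ric34_averaged_inequality
    {V : Type*} [NormedAddCommGroup V] [InnerProductSpace ℂ V] [FiniteDimensional ℂ V]
    (hn : 3 ≤ Module.finrank ℂ V)
    (R : V → V → V → V → ℂ) (hR : IsKahlerCurvatureTensor R) (φ : ℝ)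
    (hRic : ∀ K : Submodule ℂ V, Module.finrank ℂ K = 3 →
      ∀ E : Fin 3 → V, Orthonormal ℂ E → (∀ j, E j ∈ K) →
      ∀ v ∈ K, ‖v‖ = 1 →
        φ ≤ ((∑ j : Fin 3, R v v (E j) (E j)) - R v v v v).re)
    (e : Fin 3 → V) (he : Orthonormal ℂ e) :
    4 * φ ≤ (R (e 0) (e 0) (e 0) (e 0) + R (e 1) (e 1) (e 1) (e 1)
      + 2 * (R (e 0) (e 0) (e 2) (e 2) + R (e 1) (e 1) (e 2) (e 2))).re :=
  Ric34_averaged_inequality_general R hR φ hRic e he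
end
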